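/- arXiv:2312.05455 — 11 statements merged into one kernel-verified Lean document; each statement's English description precedes it below -/
import Mathlib

section
/- Let B be an integral domain, R a subring of B, and α a nonzero element of R such that the localizations satisfy B[α⁻¹] = R[α⁻¹] (i.e., every element of B becomes an element of R after multiplying by some power of α). If the ideal R ∩ αB of R is generated by α (i.e., R ∩ αB = αR), then B = R. -/
/-- Lemma 2.2(1): if `B[α⁻¹] = R[α⁻¹]` and `R ∩ αB = αR`, then `B = R`. -/
theorem stmt0 {B : Type*} [CommRing B] [IsDomain B] (R : Subring B) (α : B)
    (hαR : α ∈ R) (hα : α ≠ 0)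
    (hloc : ∀ b : B, ∃ m : ℕ, α ^ m * b ∈ R)
    (hcontr : ∀ r : B, r ∈ R → (∃ b : B, r = α * b) → ∃ s ∈ R, r = α * s) :
    ∀ b : B, b ∈ R := by
  have key : ∀ m : ℕ, ∀ b : B, α ^ m * b ∈ R → b ∈ R := by
    intro m
    induction m with
    | zero => intro b hb; simpa using hb
    | succ n ih =>
      intro b hb
      obtain ⟨s, hs, heq⟩ := hcontr (α ^ (n + 1) * b) hb ⟨α ^ n * b, by ring⟩
      have h2 : α ^ n * b = s := mul_left_cancel₀ hα (by rw [← heq]; ring)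
      exact ih b (h2 ▸ hs)
  intro b
  obtain ⟨m, hm⟩ := hloc b
  exact key m b hm
end

section
/- Let B be an integral domain, R a subring of B, α ∈ R nonzero, and g₁, …, g_r ∈ R. Suppose R ∩ αB = (α, g₁, …, g_r)R as ideals of R, and suppose there exists ℓ ≥ 1 such that g_i ∈ R ∩ αℓB for all 1 ≤ i ≤ r. Then for every j with 1 ≤ j ≤ ℓ one has R ∩ αʲB = (αʲ, g₁, …, g_r)R. -/
/-- Lemma 2.2(2): if `R ∩ αB = (α, g₁, …, g_r)R` and each `gᵢ ∈ R ∩ α^ℓ B`, then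
`R ∩ α^j B = (α^j, g₁, …, g_r)R` for `1 ≤ j ≤ ℓ`. -/
theorem stmt1 {B : Type*} [CommRing B] [IsDomain B] (R : Subring B) (α : R)
    (hα : (α : B) ≠ 0) {r : ℕ} (g : Fin r → R) (ℓ : ℕ) (hℓ : 1 ≤ ℓ)
    (h1 : (Ideal.span {(α : B)}).comap R.subtype = Ideal.span (insert α (Set.range g)))
    (hgl : ∀ i, g i ∈ (Ideal.span {(α : B) ^ ℓ}).comap R.subtype) :
    ∀ j, 1 ≤ j → j ≤ ℓ →
      (Ideal.span {(α : B) ^ j}).comap R.subtype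
        = Ideal.span (insert (α ^ j) (Set.range g)) := by
  have hspan : ∀ j, j ≤ ℓ → Ideal.span (Set.range g)
      ≤ (Ideal.span {(α : B) ^ j}).comap R.subtype := by
    intro j hj
    rw [Ideal.span_le]
    rintro _ ⟨i, rfl⟩
    have h := hgl i
    rw [Ideal.mem_comap, Ideal.mem_span_singleton] at h
    rw [SetLike.mem_coe, Ideal.mem_comap, Ideal.mem_span_singleton]
    exact dvd_trans (pow_dvd_pow _ hj) h
  have hsup : ∀ j, j ≤ ℓ → Ideal.span (insert (α ^ j) (Set.range g))
      ≤ (Ideal.span {(α : B) ^ j}).comap R.subtype := by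
    intro j hj
    rw [Ideal.span_insert, sup_le_iff]
    constructor
    · rw [Ideal.span_le, Set.singleton_subset_iff, SetLike.mem_coe, Ideal.mem_comap,
        Ideal.mem_span_singleton]
      simp
    · exact hspan j hj
  intro j hj1
  induction j, hj1 using Nat.le_induction with
  | base =>
    intro hjl
    refine le_antisymm ?_ (hsup 1 hjl)
    rw [show ((α : B) ^ 1) = (α : B) by ring, show (α ^ 1 : R) = α by ring]
    exact h1.le
  | succ j hj ih =>
    intro hjl
    refine le_antisymm ?_ (hsup _ hjl)
    intro x hx
    have hxj : x ∈ Ideal.span (insert (α ^ j) (Set.range g)) := by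
      rw [← ih (le_trans (Nat.le_succ j) hjl), Ideal.mem_comap, Ideal.mem_span_singleton]
      rw [Ideal.mem_comap, Ideal.mem_span_singleton] at hx
      exact dvd_trans (pow_dvd_pow _ (Nat.le_succ j)) hx
    obtain ⟨a, z, hz, hx_eq⟩ := Ideal.mem_span_insert.mp hxj
    have hzd : (α : B) ^ (j + 1) ∣ (z : B) := by
      have h := hspan _ hjl hz
      rwa [Ideal.mem_comap, Ideal.mem_span_singleton] at h
    have hxd : (α : B) ^ (j + 1) ∣ (x : B) := by
      rwa [Ideal.mem_comap, Ideal.mem_span_singleton] at hx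
    have had : (α : B) ^ (j + 1) ∣ (a : B) * (α : B) ^ j := by
      have h2 : (x : B) = (a : B) * (α : B) ^ j + (z : B) := by
        rw [hx_eq]; push_cast; ring
      have : (a : B) * (α : B) ^ j = (x : B) - (z : B) := by rw [h2]; ring
      rw [this]
      exact dvd_sub hxd hzd
    obtain ⟨c, hc⟩ := had
    have hac : (a : B) = (α : B) * c := by
      apply mul_right_cancel₀ (pow_ne_zero j hα)
      rw [hc]; ring
    have haI : a ∈ Ideal.span (insert α (Set.range g)) := by
      rw [← h1, Ideal.mem_comap, Ideal.mem_span_singleton]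
      exact ⟨c, hac⟩
    obtain ⟨b, w, hw, ha_eq⟩ := Ideal.mem_span_insert.mp haI
    refine Ideal.mem_span_insert.mpr ⟨b, w * α ^ j + z, ?_, ?_⟩
    · exact Ideal.add_mem _ (Ideal.mul_mem_right _ _ hw) hz
    · rw [hx_eq, ha_eq]; ring
end

section
/- Let B be an integral domain of characteristic zero and δ a locally nilpotent derivation on B. Then the kernel A = Ker δ is factorially closed in B: if x, y ∈ B satisfy xy ∈ A \ {0}, then x ∈ A and y ∈ A. -/
open Finset

lemma iter_deriv_mul {B : Type*} [CommRing B] (δ : Derivation ℤ B B) (p q : B) (n : ℕ) :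
    (⇑δ)^[n] (p * q) =
      ∑ k ∈ range n.succ, (n.choose k • ((⇑δ)^[n - k] p * (⇑δ)^[k] q)) := by
  induction n with
  | zero => simp [Finset.range]
  | succ n IH =>
    calc
      (⇑δ)^[n + 1] (p * q) =
          δ (∑ k ∈ range n.succ,
              n.choose k • ((⇑δ)^[n - k] p * (⇑δ)^[k] q)) := by
        rw [Function.iterate_succ_apply', IH]
      _ = (∑ k ∈ range n.succ,
            n.choose k • ((⇑δ)^[n - k + 1] p * (⇑δ)^[k] q)) +
          ∑ k ∈ range n.succ,
            n.choose k • ((⇑δ)^[n - k] p * (⇑δ)^[k + 1] q) := by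
        rw [map_sum, ← sum_add_distrib]
        refine Finset.sum_congr rfl fun k hk => ?_
        have h1 : δ (n.choose k • ((⇑δ)^[n - k] p * (⇑δ)^[k] q)) =
            n.choose k • δ ((⇑δ)^[n - k] p * (⇑δ)^[k] q) :=
          map_nsmul (δ : B →ₗ[ℤ] B).toAddMonoidHom _ _
        rw [h1, Derivation.leibniz, smul_eq_mul, smul_eq_mul,
          ← Function.iterate_succ_apply' δ k, ← Function.iterate_succ_apply' δ (n - k)]
        simp only [nsmul_eq_mul]
        ring
      _ = (∑ k ∈ range n.succ,
                n.choose k.succ • ((⇑δ)^[n - k] p * (⇑δ)^[k + 1] q)) +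
              1 • ((⇑δ)^[n + 1] p * (⇑δ)^[0] q) +
            ∑ k ∈ range n.succ, n.choose k • ((⇑δ)^[n - k] p * (⇑δ)^[k + 1] q) := ?_
      _ = ((∑ k ∈ range n.succ, n.choose k • ((⇑δ)^[n - k] p * (⇑δ)^[k + 1] q)) +
              ∑ k ∈ range n.succ,
                n.choose k.succ • ((⇑δ)^[n - k] p * (⇑δ)^[k + 1] q)) +
            1 • ((⇑δ)^[n + 1] p * (⇑δ)^[0] q) := by
        rw [add_comm, add_assoc]
      _ = (∑ i ∈ range n.succ,
              (n + 1).choose (i + 1) • ((⇑δ)^[n + 1 - (i + 1)] p * (⇑δ)^[i + 1] q)) +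
            1 • ((⇑δ)^[n + 1] p * (⇑δ)^[0] q) := by
        simp_rw [Nat.choose_succ_succ, Nat.succ_sub_succ, add_smul, sum_add_distrib]
      _ = ∑ k ∈ range n.succ.succ,
            n.succ.choose k • ((⇑δ)^[n.succ - k] p * (⇑δ)^[k] q) := by
        rw [sum_range_succ' _ n.succ, Nat.choose_zero_right, tsub_zero]
    congr
    refine (sum_range_succ' _ _).trans (congr_arg₂ (· + ·) ?_ ?_)
    · rw [sum_range_succ, Nat.choose_succ_self, zero_smul, add_zero]
      refine sum_congr rfl fun k hk => ?_
      rw [mem_range] at hk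
      congr
      omega
    · rw [Nat.choose_zero_right, tsub_zero]

/-- The kernel of a locally nilpotent derivation on a characteristic-zero domain is
factorially closed: if `x * y` is a nonzero kernel element, then both `x` and `y`
are kernel elements. -/
theorem stmt2 {B : Type*} [CommRing B] [IsDomain B] [CharZero B]
    (δ : Derivation ℤ B B) (hln : ∀ b : B, ∃ n : ℕ, (⇑δ)^[n] b = 0)
    (x y : B) (hxy : δ (x * y) = 0) (hne : x * y ≠ 0) :
    δ x = 0 ∧ δ y = 0 := by
  have hx0 : x ≠ 0 := fun h => hne (by simp [h])
  have hy0 : y ≠ 0 := fun h => hne (by simp [h])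
  -- minimal m with δ^[m+1] x = 0
  obtain ⟨mx, hmx⟩ := hln x
  obtain ⟨my, hmy⟩ := hln y
  -- define degree: least n with δ^[n] = 0
  -- minimal exponents
  classical
  have hex : ∃ n, (⇑δ)^[n] x = 0 := ⟨mx, hmx⟩
  have hey : ∃ n, (⇑δ)^[n] y = 0 := ⟨my, hmy⟩
  let dx := Nat.find hex
  let dy := Nat.find hey
  have hdx : (⇑δ)^[dx] x = 0 := Nat.find_spec hex
  have hdy : (⇑δ)^[dy] y = 0 := Nat.find_spec hey
  have hdxpos : 0 < dx := by
    rcases Nat.eq_zero_or_pos dx with h | h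
    · exfalso; apply hx0; simpa [h] using hdx
    · exact h
  have hdypos : 0 < dy := by
    rcases Nat.eq_zero_or_pos dy with h | h
    · exfalso; apply hy0; simpa [h] using hdy
    · exact h
  have hdx' : (⇑δ)^[dx - 1] x ≠ 0 := Nat.find_min hex (Nat.sub_lt hdxpos one_pos)
  have hdy' : (⇑δ)^[dy - 1] y ≠ 0 := Nat.find_min hey (Nat.sub_lt hdypos one_pos)
  -- δ^[k] (x*y) = 0 for all k ≥ 1
  have hall : ∀ k : ℕ, (⇑δ)^[k + 1] (x * y) = 0 := by
    intro k
    induction k with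
    | zero => simpa using hxy
    | succ k ih => rw [Function.iterate_succ_apply']; rw [ih]; simp
  -- suppose dx + dy - 2 ≥ 1, derive contradiction; i.e. show dx = 1 and dy = 1
  have main : dx = 1 ∧ dy = 1 := by
    by_contra h
    have hge : dx - 1 + (dy - 1) ≥ 1 := by omega
    set N := dx - 1 + (dy - 1) with hN
    have hiter := iter_deriv_mul δ x y N
    have hzero : (⇑δ)^[N] (x * y) = 0 := by
      obtain ⟨k, hk⟩ : ∃ k, N = k + 1 := ⟨N - 1, by omega⟩
      rw [hk]; exact hall k
    rw [hzero] at hiter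
    -- all terms except k = dy - 1 vanish
    have hterm : ∀ k ∈ Finset.range (N + 1), k ≠ dy - 1 →
        N.choose k • ((⇑δ)^[N - k] x * (⇑δ)^[k] y) = 0 := by
      intro k hk hne'
      rw [Finset.mem_range] at hk
      rcases lt_or_gt_of_ne hne' with hlt | hgt
      · have hle : dx ≤ N - k := by omega
        have hzx : (⇑δ)^[N - k] x = 0 := by
          obtain ⟨j, hj⟩ := Nat.exists_eq_add_of_le hle
          rw [hj, add_comm, Function.iterate_add_apply, hdx]
          simp
        simp [hzx]
      · have hle : dy ≤ k := by omega
        have hzy : (⇑δ)^[k] y = 0 := by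
          obtain ⟨j, hj⟩ := Nat.exists_eq_add_of_le hle
          rw [hj, add_comm, Function.iterate_add_apply, hdy]
          simp
        simp [hzy]
    rw [Finset.sum_eq_single_of_mem (dy - 1)
      (Finset.mem_range.mpr (by omega)) hterm] at hiter
    have hNk : N - (dy - 1) = dx - 1 := by omega
    rw [hNk] at hiter
    have hch : (N.choose (dy - 1) : B) ≠ 0 := by
      exact_mod_cast Nat.cast_ne_zero.mpr (Nat.choose_pos (by omega)).ne'
    have : ((N.choose (dy - 1) : B)) * ((⇑δ)^[dx - 1] x * (⇑δ)^[dy - 1] y) = 0 := by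
      rw [← nsmul_eq_mul]; exact hiter.symm
    rcases mul_eq_zero.mp this with h1 | h2
    · exact hch h1
    · rcases mul_eq_zero.mp h2 with h3 | h4
      · exact hdx' h3
      · exact hdy' h4
  obtain ⟨h1, h2⟩ := main
  constructor
  · have := hdx; rw [h1] at this; simpa using this
  · have := hdy; rw [h2] at this; simpa using this
end

section
/- Let B be an integral domain of characteristic zero with a locally nilpotent derivation δ and A = Ker δ. Suppose the quotient extension A ⊆ B makes B a faithfully flat A-module, and let a₁, a₂ ∈ δ(B) ∩ A be nonzero elements of the plinth ideal in a UFD A. Then gcd(a₁, a₂) ∈ δ(B) ∩ A. -/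
/-!
Write `aᵢ = d bᵢ` with `b₁, b₂` relatively prime and `δ sᵢ = aᵢ`. The element
`w = b₂ s₁ - b₁ s₂` is a constant, and `d w = a₂ s₁ - a₁ s₂` lies in `(a₁, a₂)B ∩ A = (a₁, a₂)A`
by faithful flatness; cancelling `d` gives `w = x b₁ + y b₂` with `x, y ∈ A`, that is
`b₂ (s₁ - y) = b₁ (s₂ + x)`. Flatness of `B` over `A` then makes `s₁ - y` a multiple `b₁ s`,
and `b₁ δ s = δ (s₁ - y) = d b₁` forces `δ s = d`.
-/

lemma isRelPrime_of_forall_dvd_mul {α : Type*} [CommMonoidWithZero α] [IsCancelMulZero α]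
    {d b₁ b₂ : α} (hd : d ≠ 0) (h : ∀ e, e ∣ d * b₁ → e ∣ d * b₂ → e ∣ d) : IsRelPrime b₁ b₂ := by
  intro e he₁ he₂
  have hde : d * e ∣ d * 1 := by
    rw [mul_one]
    exact h _ (mul_dvd_mul_left d he₁) (mul_dvd_mul_left d he₂)
  exact isUnit_of_dvd_one ((mul_dvd_mul_iff_left hd).mp hde)

lemma Ideal.mem_span_pair_of_faithfullyFlat {A B : Type*} [CommRing A] [CommRing B]
    [Algebra A B] [Module.FaithfullyFlat A B] {a₁ a₂ c : A} {x y : B}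
    (h : algebraMap A B c = x * algebraMap A B a₁ + y * algebraMap A B a₂) :
    c ∈ Ideal.span {a₁, a₂} := by
  rw [← Ideal.comap_map_eq_self_of_faithfullyFlat (B := B) (Ideal.span {a₁, a₂}),
    Ideal.mem_comap, Ideal.map_span, Set.image_pair, Ideal.mem_span_pair]
  exact ⟨x, y, h.symm⟩

/-- The equational criterion factors the relation `b₂ t - b₁ u = 0` through a free module, where
`b₁` must divide every coefficient of `t`. -/
lemma Module.Flat.exists_eq_smul_of_smul_eq_smul {R M : Type*} [CommRing R]
    [DecompositionMonoid R] [AddCommGroup M] [Module R M] [Module.Flat R M] {b₁ b₂ : R}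
    (hb : IsRelPrime b₁ b₂) {t u : M} (h : b₂ • t = b₁ • u) : ∃ s : M, t = b₁ • s := by
  have hrel : ∑ i, ![b₂, -b₁] i • ![t, u] i = 0 := by
    simp [h]
  obtain ⟨k, a, y, hxy, hay⟩ := Module.Flat.isTrivialRelation_of_sum_smul_eq_zero hrel
  have hdvd : ∀ j, b₁ ∣ a 0 j := fun j ↦ by
    have hj := hay j
    simp only [Fin.sum_univ_two, Matrix.cons_val_zero, Matrix.cons_val_one] at hj
    exact hb.dvd_of_dvd_mul_right ⟨a 1 j, by linear_combination hj⟩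
  choose c hc using hdvd
  refine ⟨∑ j, c j • y j, ?_⟩
  rw [show t = ∑ j, a 0 j • y j from hxy 0, Finset.smul_sum]
  simp only [hc, mul_smul]

theorem Derivation.exists_eq_of_isRelPrime {R B : Type*} [CommRing R] [CommRing B] [IsDomain B]
    [Algebra R B] (δ : Derivation R B B) (A : Subalgebra R B) (hA : ∀ b : B, b ∈ A ↔ δ b = 0)
    [DecompositionMonoid A] [Module.FaithfullyFlat A B] {d b₁ b₂ : A} (hd : (d : B) ≠ 0)
    (hb₁ : (b₁ : B) ≠ 0) (hb : IsRelPrime b₁ b₂) {s₁ s₂ : B}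
    (hs₁ : δ s₁ = d * b₁) (hs₂ : δ s₂ = d * b₂) : ∃ s : B, δ s = d := by
  have hδA : ∀ a : A, δ a = 0 := fun a ↦ (hA a).mp a.2
  have hw : (d : B) * (b₂ * s₁ - b₁ * s₂) ∈ A := by
    rw [hA]
    simp only [map_sub, Derivation.leibniz, smul_eq_mul, hs₁, hs₂, hδA]
    ring
  have hdescent : (⟨_, hw⟩ : A) ∈ Ideal.span {d * b₁, d * b₂} := by
    refine Ideal.mem_span_pair_of_faithfullyFlat (B := B) (x := -s₂) (y := s₁) ?_
    simp only [Subalgebra.algebraMap_apply, MulMemClass.coe_mul]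
    ring
  obtain ⟨x, y, hxy⟩ := Ideal.mem_span_pair.mp hdescent
  have hcancel : b₂ • (s₁ - y) = b₁ • (s₂ + x) := by
    have hxyB := congrArg Subtype.val hxy
    simp only [MulMemClass.coe_mul, AddMemClass.coe_add] at hxyB
    simp only [Subalgebra.smul_def, smul_eq_mul]
    linear_combination (mul_left_cancel₀ hd (by rw [← hxyB]; ring) :
      (b₂ : B) * s₁ - b₁ * s₂ = x * b₁ + y * b₂)
  obtain ⟨s, hs⟩ := Module.Flat.exists_eq_smul_of_smul_eq_smul hb hcancel
  rw [Subalgebra.smul_def, smul_eq_mul] at hs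
  refine ⟨s, mul_left_cancel₀ hb₁ ?_⟩
  have hδs := congrArg δ hs
  rw [map_sub, hs₁, hδA, sub_zero, Derivation.leibniz, smul_eq_mul, smul_eq_mul, hδA,
    mul_zero, add_zero] at hδs
  rw [← hδs, mul_comm]

theorem stmt8_general {k B : Type*} [Field k]
    [CommRing B] [IsDomain B] [Algebra k B]
    (δ : Derivation k B B)
    (A : Subalgebra k B) (hA : ∀ b : B, b ∈ A ↔ δ b = 0)
    [UniqueFactorizationMonoid A] [Module.FaithfullyFlat A B]
    (a₁ a₂ : A) (h1 : (a₁ : B) ≠ 0)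
    (hs1 : ∃ s : B, δ s = a₁) (hs2 : ∃ s : B, δ s = a₂)
    (d : A) (hd1 : d ∣ a₁) (hd2 : d ∣ a₂)
    (hdmax : ∀ e : A, e ∣ a₁ → e ∣ a₂ → e ∣ d) :
    ∃ s : B, δ s = d := by
  obtain ⟨s₁, hs₁⟩ := hs1
  obtain ⟨s₂, hs₂⟩ := hs2
  obtain ⟨b₁, rfl⟩ := hd1
  obtain ⟨b₂, rfl⟩ := hd2
  obtain ⟨hd, hb₁⟩ : (d : B) ≠ 0 ∧ (b₁ : B) ≠ 0 := by simpa using h1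
  have hb : IsRelPrime b₁ b₂ :=
    isRelPrime_of_forall_dvd_mul (fun hd0 ↦ hd (by simp [hd0])) hdmax
  exact δ.exists_eq_of_isRelPrime A hA hd hb₁ hb (by simpa using hs₁) (by simpa using hs₂)

/-- Lemma 2.1 (gcd step): if `B` is an affine domain over an algebraically closed
field `k` of characteristic `0` with locally nilpotent derivation `δ`, the kernel
`A` is a UFD, and `B` is faithfully flat over `A`, then the gcd of two nonzero
elements of the plinth ideal `δ(B) ∩ A` again lies in the plinth ideal. -/
theorem stmt8 {k B : Type*} [Field k] [IsAlgClosed k] [CharZero k]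
    [CommRing B] [IsDomain B] [Algebra k B] [Algebra.FiniteType k B]
    (δ : Derivation k B B) (hln : ∀ b : B, ∃ n : ℕ, (⇑δ)^[n] b = 0)
    (A : Subalgebra k B) (hA : ∀ b : B, b ∈ A ↔ δ b = 0)
    [UniqueFactorizationMonoid A] [Module.FaithfullyFlat A B]
    (a₁ a₂ : A) (h1 : (a₁ : B) ≠ 0) (h2 : (a₂ : B) ≠ 0)
    (hs1 : ∃ s : B, δ s = a₁) (hs2 : ∃ s : B, δ s = a₂)
    (d : A) (hd1 : d ∣ a₁) (hd2 : d ∣ a₂)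
    (hdmax : ∀ e : A, e ∣ a₁ → e ∣ a₂ → e ∣ d) :
    ∃ s : B, δ s = d :=
  stmt8_general δ A hA a₁ a₂ h1 hs1 hs2 d hd1 hd2 hdmax
end

section
/- Let R be a Noetherian UFD, and let I be a prime ideal of R generated by two coprime elements f and g. Then the affine modification R[g/f] ≅ R[Y]/(fY − g) is an integral domain, and if moreover f remains prime in R[g/f] and R[g/f][f⁻¹] is a UFD, then R[g/f] is a UFD (Nagata's criterion applied to the affine modification). -/
/-!
Since `f` and `g` are coprime, `fY - g` is primitive, so by Gauss's lemma a polynomial over `R`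
is divisible by it as soon as it is divisible by `Y - g/f` over `Frac R`, i.e. as soon as it
vanishes at `g/f`. Hence `fY - g` generates the kernel of evaluation at `g/f`, and `R[g/f]` is a
quotient of `R[Y]`; in particular it is Noetherian, so Nagata's criterion applies.
-/

open Polynomial

section AffineModification

variable {R : Type*} [CommRing R] {f g : R}

theorem isPrimitive_C_mul_X_sub_C (hcop : IsRelPrime f g) : (C f * X - C g).IsPrimitive := by
  intro r hr
  rw [C_dvd_iff_dvd_coeff] at hr
  simpa using hcop (by simpa using hr 1) (by simpa using hr 0)

variable (K : Type*) [Field K] [Algebra R K] [IsFractionRing R K]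

theorem map_C_mul_X_sub_C_eq (hf : f ≠ 0) :
    (C f * X - C g).map (algebraMap R K) =
      C (algebraMap R K f) * (X - C (algebraMap R K g / algebraMap R K f)) := by
  have hf' : algebraMap R K f ≠ 0 := (map_ne_zero_iff _ (IsFractionRing.injective R K)).mpr hf
  simp [mul_sub, ← C_mul, mul_div_cancel₀ _ hf']

variable [IsDomain R] [IsGCDMonoid R]

theorem ker_aeval_div_eq_span (hf : f ≠ 0) (hcop : IsRelPrime f g) :
    RingHom.ker (aeval (algebraMap R K g / algebraMap R K f)) = Ideal.span {C f * X - C g} := by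
  have hf' : IsUnit (C (algebraMap R K f)) :=
    isUnit_C.mpr ((map_ne_zero_iff _ (IsFractionRing.injective R K)).mpr hf).isUnit
  ext p
  rw [RingHom.mem_ker, Ideal.mem_span_singleton,
    (isPrimitive_C_mul_X_sub_C hcop).dvd_iff_fraction_map_dvd_fraction_map K,
    map_C_mul_X_sub_C_eq K hf, hf'.mul_left_dvd, dvd_iff_isRoot, IsRoot, ← eval₂_eq_eval_map,
    ← aeval_def]

noncomputable def quotientSpanEquivAdjoinDiv (hf : f ≠ 0) (hcop : IsRelPrime f g) :
    (R[X] ⧸ Ideal.span {C f * X - C g}) ≃ₐ[R]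
      Algebra.adjoin R {algebraMap R K g / algebraMap R K f} :=
  (Ideal.quotientEquivAlgOfEq R (ker_aeval_div_eq_span K hf hcop).symm).trans <|
    (Ideal.quotientKerEquivRange _).trans <|
      Subalgebra.equivOfEq _ _ (Algebra.adjoin_singleton_eq_range_aeval R _).symm

end AffineModification

theorem stmt10_general {R : Type*} [CommRing R] [IsDomain R] [UniqueFactorizationMonoid R]
    [IsNoetherianRing R] (f g : R) (hf : f ≠ 0) (hcop : IsRelPrime f g)
    (S : Subalgebra R (FractionRing R))
    (hS : S = Algebra.adjoin R
      {algebraMap R (FractionRing R) g / algebraMap R (FractionRing R) f})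
    (fS : S)
    -- `Sf` is the localization `R[g/f][f⁻¹]`
    (Sf : Type*) [CommRing Sf] [IsDomain Sf] [Algebra S Sf]
    [IsLocalization.Away fS Sf] :
    Nonempty ((Polynomial R ⧸ Ideal.span
        {Polynomial.C f * Polynomial.X - Polynomial.C g}) ≃ₐ[R] S)
    ∧ IsDomain S
    ∧ (Prime fS → UniqueFactorizationMonoid Sf →
        UniqueFactorizationMonoid S) := by
  subst hS
  let e := quotientSpanEquivAdjoinDiv (FractionRing R) hf hcop
  have := isNoetherianRing_of_ringEquiv _ e.toRingEquiv
  exact ⟨⟨e⟩, inferInstance, fun hfS hSf ↦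
    (UniqueFactorizationMonoid.iff_of_isLocalizationAway_of_prime hfS Sf).mpr hSf⟩

/-- Affine modification along coprime `f, g` generating a prime ideal in a
Noetherian UFD `R`: the subring `R[g/f]` of `Frac R` is isomorphic to
`R[Y]/(fY - g)`, is an integral domain, and if `f` stays prime in `R[g/f]` and the
localization `R[g/f][f⁻¹]` is a UFD, then `R[g/f]` is a UFD (Nagata's criterion). -/
theorem stmt10 {R : Type*} [CommRing R] [IsDomain R] [UniqueFactorizationMonoid R]
    [IsNoetherianRing R] (f g : R) (hf : f ≠ 0) (hcop : IsRelPrime f g)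
    (hprime : (Ideal.span {f, g} : Ideal R).IsPrime)
    (S : Subalgebra R (FractionRing R))
    (hS : S = Algebra.adjoin R
      {algebraMap R (FractionRing R) g / algebraMap R (FractionRing R) f})
    (fS : S) (hfS : (fS : FractionRing R) = algebraMap R (FractionRing R) f)
    -- `Sf` is the localization `R[g/f][f⁻¹]`
    (Sf : Type*) [CommRing Sf] [IsDomain Sf] [Algebra S Sf]
    [IsLocalization.Away fS Sf] :
    Nonempty ((Polynomial R ⧸ Ideal.span
        {Polynomial.C f * Polynomial.X - Polynomial.C g}) ≃ₐ[R] S)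
    ∧ IsDomain S
    ∧ (Prime fS → UniqueFactorizationMonoid Sf →
        UniqueFactorizationMonoid S) :=
  stmt10_general f g hf hcop S hS fS Sf
end

section
/- Let B be an integral domain, R ⊆ B a subring, f ∈ R a nonzero element, and suppose δ is a locally nilpotent derivation on B restricting to R with δ(f) = 0. If I is a δ-stable ideal of R containing f, then δ extends uniquely to a derivation of the affine modification R[f⁻¹I] ⊆ Frac(R), and this extension is locally nilpotent. -/
/-!
The derivation first extends to `K = Frac B`: since `δ` satisfies the Leibniz rule,
`b ↦ b + δ(b) ε` is a ring homomorphism into the dual numbers `K[ε]`; it sends nonzero elements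
to units, so it factors through `K`, and the `ε`-component of the factorization is a derivation
`Δ` of `K`. As `δ f = 0`, `Δ (a / f) = δ(a) / f`, so `δ`-stability of `R` and `I` makes the
generators of `R[f⁻¹I]`, hence the whole ring, `Δ`-stable. The elements on which `Δ` is locally
nilpotent form a subring (Leibniz rule once more) containing all `r ∈ R` and all `a / f`, so the
restriction is locally nilpotent. Uniqueness: any derivation `D` of `R[f⁻¹I]` extending `δ`
kills `f`, so `f · D (a / f) = D a = δ a` determines `D` on the generators.
-/

/-- The affine modification `R[f⁻¹I] ⊆ Frac B`, for a subring `R` of a domain `B`,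
`0 ≠ f ∈ I ⊆ R`: the subring of the fraction field generated by `R` and the
fractions `a / f`, `a ∈ I`. -/
noncomputable def affMod {B : Type*} [CommRing B] [IsDomain B] (R : Subring B)
    (I : Ideal R) (f : B) : Subring (FractionRing B) :=
  Subring.closure ((algebraMap B (FractionRing B)) '' R ∪
    {y : FractionRing B | ∃ x ∈ I, y =
      algebraMap B (FractionRing B) ((x : R) : B) / algebraMap B (FractionRing B) f})

lemma affMod_mem {B : Type*} [CommRing B] [IsDomain B] (R : Subring B)
    (I : Ideal R) (f : B) (r : B) (hr : r ∈ R) :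
    algebraMap B (FractionRing B) r ∈ affMod R I f :=
  Subring.subset_closure (Or.inl ⟨r, hr, rfl⟩)

namespace Derivation

section Localization

variable {A S : Type*} [CommRing A] [CommRing S] [Algebra A S]
  (D : Derivation ℤ A A) (M : Submonoid A) [IsLocalization M S]

open TrivSqZeroExt

def toTrivSqZeroExt : A →+* TrivSqZeroExt S S where
  toFun a := ⟨algebraMap A S a, algebraMap A S (D a)⟩
  map_one' := TrivSqZeroExt.ext (map_one _) (by simp)
  map_mul' a b := TrivSqZeroExt.ext (map_mul _ a b) <| by
    change algebraMap A S (D (a * b)) =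
      algebraMap A S a * algebraMap A S (D b) + algebraMap A S (D a) * algebraMap A S b
    simp [D.leibniz, mul_comm]
  map_zero' := TrivSqZeroExt.ext (map_zero _) (by simp)
  map_add' a b := TrivSqZeroExt.ext (map_add _ a b) <| by
    change algebraMap A S (D (a + b)) = algebraMap A S (D a) + algebraMap A S (D b)
    simp

@[simp] lemma fst_toTrivSqZeroExt (a : A) :
    (D.toTrivSqZeroExt (S := S) a).fst = algebraMap A S a := rfl

@[simp] lemma snd_toTrivSqZeroExt (a : A) :
    (D.toTrivSqZeroExt (S := S) a).snd = algebraMap A S (D a) := rfl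

noncomputable def liftTrivSqZeroExt : S →+* TrivSqZeroExt S S :=
  IsLocalization.lift (M := M) (g := D.toTrivSqZeroExt) fun m ↦ by
    simpa [isUnit_iff_isUnit_fst] using IsLocalization.map_units S m

lemma liftTrivSqZeroExt_algebraMap (a : A) :
    D.liftTrivSqZeroExt M (algebraMap A S a) = D.toTrivSqZeroExt a :=
  IsLocalization.lift_eq _ a

lemma fst_liftTrivSqZeroExt (x : S) : (D.liftTrivSqZeroExt M x).fst = x := by
  have : (fstHom ℤ S S : _ →+* S).comp (D.liftTrivSqZeroExt M) = RingHom.id S :=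
    IsLocalization.ringHom_ext M <| RingHom.ext fun a ↦ by
      simp [liftTrivSqZeroExt_algebraMap]
  exact RingHom.congr_fun this x

noncomputable def extendLocalization : Derivation ℤ S S :=
  Derivation.mk' ((sndHom S S).toAddMonoidHom.comp
      (D.liftTrivSqZeroExt M).toAddMonoidHom).toIntLinearMap fun x y ↦ by
    simp [snd_mul, fst_liftTrivSqZeroExt, mul_comm, add_comm]

lemma extendLocalization_algebraMap (a : A) :
    D.extendLocalization M (algebraMap A S a) = algebraMap A S (D a) := by
  simp [extendLocalization, liftTrivSqZeroExt_algebraMap]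
lemma iterate_extendLocalization_algebraMap (n : ℕ) (a : A) :
    (⇑(D.extendLocalization M))^[n] (algebraMap A S a) = algebraMap A S ((⇑D)^[n] a) :=
  (Function.Semiconj.iterate_right (f := algebraMap A S)
    (fun a ↦ (D.extendLocalization_algebraMap M a).symm) n a).symm

end Localization

section Subring

variable {A : Type*} [CommRing A] (D : Derivation ℤ A A)

theorem iterate_mul_eq_zero {x y : A} : ∀ {m n : ℕ},
    (⇑D)^[m] x = 0 → (⇑D)^[n] y = 0 → (⇑D)^[m + n] (x * y) = 0
  | 0, _, hx, _ => by simp_all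
  | _, 0, _, hy => by simp_all
  | m + 1, n + 1, hx, hy => by
    have h₁ : (⇑D)^[m + 1 + n] (x * D y) = 0 :=
      iterate_mul_eq_zero hx (by rwa [← Function.iterate_succ_apply])
    have h₂ : (⇑D)^[m + 1 + n] (D x * y) = 0 := by
      rw [show m + 1 + n = m + (n + 1) by omega]
      exact iterate_mul_eq_zero (by rwa [← Function.iterate_succ_apply]) hy
    rw [show m + 1 + (n + 1) = m + 1 + n + 1 by omega, Function.iterate_succ_apply, D.leibniz,
      smul_eq_mul, smul_eq_mul, iterate_map_add, h₁, mul_comm, h₂, add_zero]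
termination_by m n => m + n

def locallyNilpotentSubring : Subring A where
  carrier := {x | ∃ n, (⇑D)^[n] x = 0}
  zero_mem' := ⟨0, rfl⟩
  one_mem' := ⟨1, D.map_one_eq_zero⟩
  add_mem' := by
    rintro x y ⟨m, hm⟩ ⟨n, hn⟩
    refine ⟨m + n, ?_⟩
    rw [iterate_map_add, Function.iterate_add_apply _ m n y, hn, iterate_map_zero, add_comm m n,
      Function.iterate_add_apply, hm, iterate_map_zero, add_zero]
  neg_mem' := by
    rintro x ⟨n, hn⟩
    exact ⟨n, by rw [iterate_map_neg, hn, neg_zero]⟩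
  mul_mem' := by
    rintro x y ⟨m, hm⟩ ⟨n, hn⟩
    exact ⟨m + n, D.iterate_mul_eq_zero hm hn⟩

theorem mapsTo_closure {s : Set A} (h : Set.MapsTo D s (Subring.closure s)) :
    Set.MapsTo D (Subring.closure s) (Subring.closure s) := by
  intro x hx
  induction hx using Subring.closure_induction with
  | mem x hx => exact h hx
  | zero => simp
  | one => simp
  | add x y _ _ hx hy => simpa using add_mem hx hy
  | neg x _ hx => simpa using hx
  | mul x y hx' hy' hx hy =>
    simpa [D.leibniz] using add_mem (mul_mem hx' hy) (mul_mem hy' hx)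

def restrictSubring (S : Subring A) (hS : Set.MapsTo D S S) : Derivation ℤ S S where
  toFun x := ⟨D x, hS x.2⟩
  map_add' x y := Subtype.ext (D.map_add x y)
  map_smul' n x := Subtype.ext (D.map_smul n x)
  map_one_eq_zero' := Subtype.ext D.map_one_eq_zero
  leibniz' x y := Subtype.ext (D.leibniz x y)

theorem iterate_restrictSubring_apply (S : Subring A) (hS : Set.MapsTo D S S) (n : ℕ) (x : S) :
    ((⇑(D.restrictSubring S hS))^[n] x : A) = (⇑D)^[n] x :=
  Function.Semiconj.iterate_right (f := Subtype.val) (fun _ ↦ rfl) n x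

theorem exists_iterate_restrictSubring_eq_zero {S : Subring A} (hS : Set.MapsTo D S S)
    (hnil : S ≤ D.locallyNilpotentSubring) (x : S) :
    ∃ n, (⇑(D.restrictSubring S hS))^[n] x = 0 := by
  obtain ⟨n, hn⟩ := hnil x.2
  exact ⟨n, Subtype.ext ((D.iterate_restrictSubring_apply S hS n x).trans hn)⟩

theorem ext_of_eqOn_closure {s : Set A}
    {D₁ D₂ : Derivation ℤ (Subring.closure s) (Subring.closure s)}
    (h : ∀ x (hx : x ∈ s),
      D₁ ⟨x, Subring.subset_closure hx⟩ = D₂ ⟨x, Subring.subset_closure hx⟩) :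
    D₁ = D₂ := by
  refine Derivation.ext fun ⟨x, hx⟩ ↦ ?_
  induction hx using Subring.closure_induction with
  | mem x hx => exact h x hx
  | zero => exact D₁.map_zero.trans D₂.map_zero.symm
  | one => exact D₁.map_one_eq_zero.trans D₂.map_one_eq_zero.symm
  | add x y hx hy h₁ h₂ =>
    change D₁ (⟨x, hx⟩ + ⟨y, hy⟩) = D₂ (⟨x, hx⟩ + ⟨y, hy⟩)
    rw [map_add, map_add, h₁, h₂]
  | neg x hx h₁ =>
    change D₁ (-⟨x, hx⟩) = D₂ (-⟨x, hx⟩)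
    rw [map_neg, map_neg, h₁]
  | mul x y hx hy h₁ h₂ =>
    change D₁ (⟨x, hx⟩ * ⟨y, hy⟩) = D₂ (⟨x, hx⟩ * ⟨y, hy⟩)
    rw [leibniz, leibniz, h₁, h₂]

end Subring

section Field

variable {K : Type*} [Field K]

/- `leibniz_div_const` cannot be applied to `extendLocalization` on `FractionRing B` directly:
the `Algebra ℤ` instance synthesized there is not reducibly `Ring.toIntAlgebra`. -/
theorem apply_div_of_apply_eq_zero (D : Derivation ℤ K K) {c : K} (hc : D c = 0) (x : K) :
    D (x / c) = D x / c := by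
  rw [leibniz_div_const _ _ _ hc, smul_eq_mul, inv_mul_eq_div]

theorem iterate_apply_div_of_apply_eq_zero (D : Derivation ℤ K K) {c : K} (hc : D c = 0)
    (n : ℕ) (x : K) : (⇑D)^[n] (x / c) = (⇑D)^[n] x / c :=
  (Function.Semiconj.iterate_right (f := (· / c))
    (fun x ↦ (D.apply_div_of_apply_eq_zero hc x).symm) n x).symm

theorem coe_apply_eq_div_of_mul_eq {S : Subring K} (E : Derivation ℤ S S)
    {c x y : S} (hc : (c : K) ≠ 0) (hEc : E c = 0) (hcy : c * y = x) :
    (E y : K) = E x / c := by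
  rw [eq_div_iff hc, ← hcy, leibniz, hEc, smul_zero, add_zero, smul_eq_mul, Subring.coe_mul,
    mul_comm]

end Field

end Derivation

section AffMod

variable {B : Type*} [CommRing B] [IsDomain B] (δ : Derivation ℤ B B)
  {R : Subring B} {I : Ideal R} {f : B}

open Derivation

def IsAffModExtension (D : Derivation ℤ (affMod R I f) (affMod R I f)) : Prop :=
  ∀ (r : B) (hr : r ∈ R),
    (D ⟨algebraMap B (FractionRing B) r, affMod_mem R I f r hr⟩ : FractionRing B) =
      algebraMap B (FractionRing B) (δ r)

theorem extendLocalization_algebraMap_div (hδf : δ f = 0) (n : ℕ) (a : B) :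
    (⇑(δ.extendLocalization (S := FractionRing B) (nonZeroDivisors B)))^[n]
        (algebraMap B _ a / algebraMap B _ f) =
      algebraMap B _ ((⇑δ)^[n] a) / algebraMap B _ f := by
  have hf : δ.extendLocalization (nonZeroDivisors B) (algebraMap B (FractionRing B) f) = 0 := by
    rw [extendLocalization_algebraMap, hδf, map_zero]
  rw [iterate_apply_div_of_apply_eq_zero _ hf, iterate_extendLocalization_algebraMap]

theorem extendLocalization_mapsTo_affMod (hR : ∀ r ∈ R, δ r ∈ R) (hδf : δ f = 0)
    (hI : ∀ x : R, x ∈ I → ∃ y ∈ I, ((y : R) : B) = δ ((x : R) : B)) :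
    Set.MapsTo (δ.extendLocalization (S := FractionRing B) (nonZeroDivisors B))
      (affMod R I f) (affMod R I f) := by
  refine mapsTo_closure _ ?_
  rintro _ (⟨r, hr, rfl⟩ | ⟨a, ha, rfl⟩)
  · rw [extendLocalization_algebraMap]
    exact affMod_mem R I f _ (hR r hr)
  · obtain ⟨b, hb, hba⟩ := hI a ha
    have h := extendLocalization_algebraMap_div δ hδf 1 a
    rw [Function.iterate_one, Function.iterate_one, ← hba] at h
    exact h ▸ Subring.subset_closure (Or.inr ⟨b, hb, rfl⟩)

theorem affMod_le_locallyNilpotentSubring (hln : ∀ b : B, ∃ n, (⇑δ)^[n] b = 0)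
    (hδf : δ f = 0) :
    affMod R I f ≤ locallyNilpotentSubring
      (δ.extendLocalization (S := FractionRing B) (nonZeroDivisors B)) := by
  refine Subring.closure_le.2 ?_
  rintro _ (⟨r, -, rfl⟩ | ⟨a, -, rfl⟩)
  · obtain ⟨n, hn⟩ := hln r
    exact ⟨n, by rw [iterate_extendLocalization_algebraMap, hn, map_zero]⟩
  · obtain ⟨n, hn⟩ := hln a
    exact ⟨n, by rw [extendLocalization_algebraMap_div δ hδf, hn, map_zero, zero_div]⟩

theorem IsAffModExtension.apply_div (hfR : f ∈ R) (hf0 : f ≠ 0) (hδf : δ f = 0)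
    {D : Derivation ℤ (affMod R I f) (affMod R I f)} (hD : IsAffModExtension δ D)
    (a : R) (ha : a ∈ I) :
    (D ⟨_, Subring.subset_closure (Or.inr ⟨a, ha, rfl⟩)⟩ : FractionRing B) =
      algebraMap B _ (δ a) / algebraMap B _ f := by
  have hf : algebraMap B (FractionRing B) f ≠ 0 :=
    (map_ne_zero_iff _ (IsFractionRing.injective B _)).2 hf0
  have hc : D ⟨_, affMod_mem R I f f hfR⟩ = 0 :=
    Subtype.ext <| by rw [hD f hfR, hδf, map_zero]; rfl
  rw [D.coe_apply_eq_div_of_mul_eq (x := ⟨_, affMod_mem R I f _ a.2⟩) hf hc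
    (Subtype.ext (mul_div_cancel₀ _ hf)), hD _ a.2]

theorem IsAffModExtension.eq (hfR : f ∈ R) (hf0 : f ≠ 0) (hδf : δ f = 0)
    {D₁ D₂ : Derivation ℤ (affMod R I f) (affMod R I f)}
    (h₁ : IsAffModExtension δ D₁) (h₂ : IsAffModExtension δ D₂) : D₁ = D₂ := by
  refine ext_of_eqOn_closure ?_
  rintro _ (⟨r, hr, rfl⟩ | ⟨a, ha, rfl⟩)
  · exact Subtype.ext ((h₁ r hr).trans (h₂ r hr).symm)
  · exact Subtype.ext ((h₁.apply_div δ hfR hf0 hδf a ha).trans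
      (h₂.apply_div δ hfR hf0 hδf a ha).symm)

end AffMod

theorem stmt11_general {B : Type*} [CommRing B] [IsDomain B]
    (δ : Derivation ℤ B B) (hln : ∀ b : B, ∃ n : ℕ, (⇑δ)^[n] b = 0)
    (R : Subring B) (hR : ∀ r ∈ R, δ r ∈ R)
    (f : B) (hfR : f ∈ R) (hf0 : f ≠ 0) (hδf : δ f = 0)
    (I : Ideal R)
    (hIstable : ∀ x : R, x ∈ I → ∃ y ∈ I, ((y : R) : B) = δ ((x : R) : B)) :
    ∃ D : Derivation ℤ (affMod R I f) (affMod R I f),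
      ((∀ (r : B) (hr : r ∈ R),
          (D ⟨algebraMap B (FractionRing B) r, affMod_mem R I f r hr⟩ : FractionRing B)
            = algebraMap B (FractionRing B) (δ r)) ∧
        (∀ x : affMod R I f, ∃ n : ℕ, (⇑D)^[n] x = 0)) ∧
      (∀ D' : Derivation ℤ (affMod R I f) (affMod R I f),
        (∀ (r : B) (hr : r ∈ R),
          (D' ⟨algebraMap B (FractionRing B) r, affMod_mem R I f r hr⟩ : FractionRing B)
            = algebraMap B (FractionRing B) (δ r)) → D' = D) := by
  let Δ := δ.extendLocalization (S := FractionRing B) (nonZeroDivisors B)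
  have hstable := extendLocalization_mapsTo_affMod δ hR hδf hIstable
  have hD : IsAffModExtension δ (Δ.restrictSubring _ hstable) := fun r _ ↦
    δ.extendLocalization_algebraMap _ r
  refine ⟨Δ.restrictSubring _ hstable, ⟨hD, ?_⟩, fun D' hD' ↦ ?_⟩
  · exact Δ.exists_iterate_restrictSubring_eq_zero hstable
      (affMod_le_locallyNilpotentSubring δ hln hδf)
  · exact IsAffModExtension.eq δ hfR hf0 hδf hD' hD

/-- If `δ` is a locally nilpotent derivation of a characteristic-zero domain `B`
restricting to a subring `R`, `δ f = 0`, and `I` is a `δ`-stable ideal of `R`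
containing `f`, then `δ` extends uniquely to a derivation of the affine
modification `R[f⁻¹I]`, and the extension is again locally nilpotent. -/
theorem stmt11 {B : Type*} [CommRing B] [IsDomain B] [CharZero B]
    (δ : Derivation ℤ B B) (hln : ∀ b : B, ∃ n : ℕ, (⇑δ)^[n] b = 0)
    (R : Subring B) (hR : ∀ r ∈ R, δ r ∈ R)
    (f : B) (hfR : f ∈ R) (hf0 : f ≠ 0) (hδf : δ f = 0)
    (I : Ideal R) (hfI : (⟨f, hfR⟩ : R) ∈ I)
    (hIstable : ∀ x : R, x ∈ I → ∃ y ∈ I, ((y : R) : B) = δ ((x : R) : B)) :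
    ∃ D : Derivation ℤ (affMod R I f) (affMod R I f),
      ((∀ (r : B) (hr : r ∈ R),
          (D ⟨algebraMap B (FractionRing B) r, affMod_mem R I f r hr⟩ : FractionRing B)
            = algebraMap B (FractionRing B) (δ r)) ∧
        (∀ x : affMod R I f, ∃ n : ℕ, (⇑D)^[n] x = 0)) ∧
      (∀ D' : Derivation ℤ (affMod R I f) (affMod R I f),
        (∀ (r : B) (hr : r ∈ R),
          (D' ⟨algebraMap B (FractionRing B) r, affMod_mem R I f r hr⟩ : FractionRing B)
            = algebraMap B (FractionRing B) (δ r)) → D' = D) :=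
  stmt11_general δ hln R hR f hfR hf0 hδf I hIstable
end

section
/- Let B be a UFD of characteristic zero with an irreducible locally nilpotent derivation δ, A = Ker δ an affine k-domain, plinth ideal δ(B) ∩ A = α^p β A with α ∈ A prime coprime to β ∈ A, p > 0, and z ∈ B with δ(z) = α^p β. Let I₁ = A[z] ∩ αB, and let g(z) ∈ I₁ be a primitive polynomial over A whose image ḡ generates I₁ ⊗_A Frac(A/αA) in Frac(A/αA)[z̄]. Then deg_{z̄} ḡ(z̄) > 1. -/
/-! If every coefficient of `g` of degree `> 1` were divisible by `α`, reducing `g(z) ∈ αB`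
modulo `α` would give `c₀ + c₁ z = α b` with `c₀, c₁ ∈ A`. Applying `δ` gives
`δ b = c₁ α^(p-1) β`, an element of the plinth ideal `α^p β A`, so `α ∣ c₁`; then
`c₀ = α (b - u z)` with `b - u z ∈ Ker δ = A`, so `α ∣ c₀` as well, and `ḡ = 0`. -/

open Polynomial

theorem Polynomial.exists_eq_C_add_C_mul_X_add_C_mul {R : Type*} [CommRing R] {f : R[X]} {a : R}
    (h : ∀ n, 1 < n → a ∣ f.coeff n) :
    ∃ q : R[X], f = C (f.coeff 0) + C (f.coeff 1) * X + C a * q := by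
  suffices C a ∣ f - (C (f.coeff 0) + C (f.coeff 1) * X) by
    obtain ⟨q, hq⟩ := this
    exact ⟨q, by rw [← hq]; ring⟩
  refine (C_dvd_iff_dvd_coeff _ _).2 fun n => ?_
  match n with
  | 0 => simp
  | 1 => simp
  | n + 2 => simpa [coeff_C, coeff_X] using h (n + 2) (by omega)

namespace Derivation

variable {k B : Type*} [CommRing k] [CommRing B] [Algebra k B] {δ : Derivation k B B}

theorem apply_mul_of_apply_eq_zero {a : B} (ha : δ a = 0) (b : B) : δ (a * b) = a * δ b := by
  simp [leibniz, ha]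

variable [IsDomain B] {A : Subalgebra k B}

theorem dvd_of_add_mul_eq_mul (hA : ∀ b : B, b ∈ A ↔ δ b = 0) {α β : A} {p : ℕ} (hp : 0 < p)
    (hα : (α : B) ≠ 0) (hβ : (β : B) ≠ 0)
    (hplinth : ∀ x : B, δ x = 0 →
      (∃ c : B, δ c = x) → ∃ u : B, δ u = 0 ∧ x = (α : B) ^ p * (β : B) * u)
    {z : B} (hz : δ z = (α : B) ^ p * (β : B)) {c₀ c₁ : A} {b : B}
    (h : (c₀ : B) + c₁ * z = α * b) : α ∣ c₀ ∧ α ∣ c₁ := by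
  have hker (a : A) : δ (a : B) = 0 := (hA _).1 a.2
  have hαp : (α : B) ^ p = α * α ^ (p - 1) := (mul_pow_sub_one hp.ne' _).symm
  have hδb : δ b = c₁ * α ^ (p - 1) * β := by
    apply mul_left_cancel₀ hα
    rw [← apply_mul_of_apply_eq_zero (hker α), ← h, map_add, hker, apply_mul_of_apply_eq_zero
      (hker c₁), hz, hαp]
    ring
  obtain ⟨u, hu, hδb_eq⟩ :=
    hplinth _ (by exact_mod_cast hker (c₁ * α ^ (p - 1) * β)) ⟨b, hδb⟩
  have hc₁ : (c₁ : B) = α * u := by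
    apply mul_left_cancel₀ (mul_ne_zero (pow_ne_zero (p - 1) hα) hβ)
    linear_combination hδb_eq + β * u * hαp
  have hv : δ (b - u * z) = 0 := by
    rw [map_sub, apply_mul_of_apply_eq_zero hu, hz, hδb, hc₁, hαp]
    ring
  refine ⟨⟨⟨b - u * z, (hA _).2 hv⟩, Subtype.ext ?_⟩, ⟨⟨u, (hA u).2 hu⟩, Subtype.ext hc₁⟩⟩
  push_cast
  linear_combination h - z * hc₁

end Derivation

theorem stmt15_general {k B : Type*} [Field k] [CommRing B] [IsDomain B]
    [Algebra k B]
    (δ : Derivation k B B)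
    (A : Subalgebra k B) (hA : ∀ b : B, b ∈ A ↔ δ b = 0)
    (α β : A) (p : ℕ) (hp : 0 < p) (hαprime : Prime α) (hcop : IsRelPrime α β)
    (hplinth : ∀ x : B, δ x = 0 →
      ((∃ c : B, δ c = x) ↔ ∃ u : B, δ u = 0 ∧ x = (α : B) ^ p * (β : B) * u))
    (z : B) (hz : δ z = (α : B) ^ p * (β : B))
    (g : Polynomial A)
    (hgI : ∃ b : B, Polynomial.aeval z g = (α : B) * b)
    (hgne : ∃ n : ℕ, ¬ α ∣ g.coeff n) :
    ∃ n : ℕ, 1 < n ∧ ¬ α ∣ g.coeff n := by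
  have hα : (α : B) ≠ 0 := by exact_mod_cast hαprime.ne_zero
  have hβ : (β : B) ≠ 0 := by
    rintro hβ0
    exact hαprime.not_isUnit (hcop dvd_rfl (by simp [ZeroMemClass.coe_eq_zero.1 hβ0]))
  by_contra! hhigh
  obtain ⟨q, hq⟩ := exists_eq_C_add_C_mul_X_add_C_mul hhigh
  obtain ⟨b, hb⟩ := hgI
  have hlin : (g.coeff 0 : B) + g.coeff 1 * z = α * (b - aeval z q) := by
    rw [hq] at hb
    simp only [map_add, map_mul, aeval_C, aeval_X] at hb
    change (g.coeff 0 : B) + g.coeff 1 * z + α * aeval z q = α * b at hb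
    linear_combination hb
  obtain ⟨h₀, h₁⟩ := Derivation.dvd_of_add_mul_eq_mul hA hp hα hβ (fun x hx => (hplinth x hx).1)
    hz hlin
  obtain ⟨n, hn⟩ := hgne
  match n with
  | 0 => exact hn h₀
  | 1 => exact hn h₁
  | n + 2 => exact hn (hhigh _ (by omega))

/-- Lemma 3.2(2): with plinth ideal `δ(B) ∩ A = α^p β A` (`α` prime, coprime to
`β`, `p > 0`), `δ z = α^p β`, and `g ∈ I₁ = A[z] ∩ αB` a primitive polynomial over
`A` whose image modulo `α` is nonzero and of minimal degree among the images of
elements of `I₁` (i.e. `ḡ` generates `I₁ ⊗ Frac(A/αA)`), the degree of `ḡ` in `z̄`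
is `> 1`: some coefficient `g.coeff n` with `n > 1` is not divisible by `α`. -/
theorem stmt15 {k B : Type*} [Field k] [CharZero k] [CommRing B] [IsDomain B]
    [UniqueFactorizationMonoid B] [Algebra k B]
    (δ : Derivation k B B) (hln : ∀ b : B, ∃ n : ℕ, (⇑δ)^[n] b = 0)
    (hirr : ∀ b : B, (∀ x : B, b ∣ δ x) → IsUnit b)
    (A : Subalgebra k B) (hA : ∀ b : B, b ∈ A ↔ δ b = 0) (hAfg : A.FG)
    (α β : A) (p : ℕ) (hp : 0 < p) (hαprime : Prime α) (hcop : IsRelPrime α β)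
    (hplinth : ∀ x : B, δ x = 0 →
      ((∃ c : B, δ c = x) ↔ ∃ u : B, δ u = 0 ∧ x = (α : B) ^ p * (β : B) * u))
    (z : B) (hz : δ z = (α : B) ^ p * (β : B))
    (g : Polynomial A) (hgprim : g.IsPrimitive)
    (hgI : ∃ b : B, Polynomial.aeval z g = (α : B) * b)
    (hgne : ∃ n : ℕ, ¬ α ∣ g.coeff n)
    (hgmin : ∀ P : Polynomial A,
      (∃ b : B, Polynomial.aeval z P = (α : B) * b) →
      (∃ n : ℕ, ¬ α ∣ P.coeff n) →
      ∀ n : ℕ, ¬ α ∣ g.coeff n → ∃ m : ℕ, n ≤ m ∧ ¬ α ∣ P.coeff m) :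
    ∃ n : ℕ, 1 < n ∧ ¬ α ∣ g.coeff n :=
  stmt15_general δ A hA α β p hp hαprime hcop hplinth z hz g hgI hgne
end

section
/- With the setting above (plinth ideal δ(B)∩A = α^p β A, δ(z) = α^p β, g ∈ I₁ = A[z] ∩ αB of minimal degree modulo α), write g(z) = α^{ℓ₁} y₁ with y₁ ∈ B and ℓ₁ maximal (y₁ ∉ αB). Then ℓ₁ ≤ p, and δ(y₁) = α^{p−ℓ₁} β g'(z), where g' denotes the derivative of g with respect to z. -/
/-- Lemma 3.2(4): with plinth ideal `δ(B) ∩ A = α^p β A`, `δ z = α^p β`, and `g` a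
minimal-degree element of `I₁ = A[z] ∩ αB` (primitive over `A`), writing
`g(z) = α^{ℓ₁} y₁` with `y₁ ∉ αB`, one has `ℓ₁ ≤ p` and
`δ y₁ = α^{p-ℓ₁} β g'(z)`. -/
theorem stmt16 {k B : Type*} [Field k] [CharZero k] [CommRing B] [IsDomain B]
    [UniqueFactorizationMonoid B] [Algebra k B]
    (δ : Derivation k B B) (hln : ∀ b : B, ∃ n : ℕ, (⇑δ)^[n] b = 0)
    (hirr : ∀ b : B, (∀ x : B, b ∣ δ x) → IsUnit b)
    (A : Subalgebra k B) (hA : ∀ b : B, b ∈ A ↔ δ b = 0) (hAfg : A.FG)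
    (α β : A) (p : ℕ) (hp : 0 < p) (hαprime : Prime α) (hcop : IsRelPrime α β)
    (hplinth : ∀ x : B, δ x = 0 →
      ((∃ c : B, δ c = x) ↔ ∃ u : B, δ u = 0 ∧ x = (α : B) ^ p * (β : B) * u))
    (z : B) (hz : δ z = (α : B) ^ p * (β : B))
    (g : Polynomial A) (hgprim : g.IsPrimitive)
    (hgI : ∃ b : B, Polynomial.aeval z g = (α : B) * b)
    (hgne : ∃ n : ℕ, ¬ α ∣ g.coeff n)
    (hgmin : ∀ P : Polynomial A,
      (∃ b : B, Polynomial.aeval z P = (α : B) * b) →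
      (∃ n : ℕ, ¬ α ∣ P.coeff n) →
      ∀ n : ℕ, ¬ α ∣ g.coeff n → ∃ m : ℕ, n ≤ m ∧ ¬ α ∣ P.coeff m)
    (ℓ₁ : ℕ) (hℓ₁ : 0 < ℓ₁) (y₁ : B)
    (hgy : Polynomial.aeval z g = (α : B) ^ ℓ₁ * y₁)
    (hy₁ : ¬ (α : B) ∣ y₁) :
    ℓ₁ ≤ p ∧
      δ y₁ = (α : B) ^ (p - ℓ₁) * (β : B) *
        Polynomial.aeval z (Polynomial.derivative g) := by
  classical
  have hδA : ∀ a : A, δ (a : B) = 0 := fun a => (hA _).1 a.2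
  have hαB0 : (α : B) ≠ 0 := fun h => hαprime.ne_zero (Subtype.ext h)
  -- view δ as an A-derivation
  let δ' : Derivation A B B :=
    { toFun := ⇑δ
      map_add' := fun x y => δ.map_add x y
      map_smul' := fun a x => by
        show δ (a • x) = a • δ x
        rw [Algebra.smul_def, Algebra.smul_def, δ.leibniz]
        have : algebraMap A B a = (a : B) := rfl
        rw [this, hδA, smul_zero, add_zero, smul_eq_mul]
      map_one_eq_zero' := δ.map_one_eq_zero
      leibniz' := fun x y => δ.leibniz x y }
  have hδ' : ∀ b : B, δ' b = δ b := fun _ => rfl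
  set G' : B := Polynomial.aeval z (Polynomial.derivative g) with hG'
  -- the key equation
  have hkey : (α : B) ^ ℓ₁ * δ y₁ = (α : B) ^ p * (β : B) * G' := by
    have h1 : δ (Polynomial.aeval z g) = G' * ((α : B) ^ p * (β : B)) := by
      rw [← hδ', Derivation.map_aeval, hδ' z, hz, smul_eq_mul]
    have h2 : δ (Polynomial.aeval z g) = (α : B) ^ ℓ₁ * δ y₁ := by
      rw [hgy, δ.leibniz]
      have : (α : B) ^ ℓ₁ = ((α ^ ℓ₁ : A) : B) := by push_cast; ring
      rw [this, hδA, smul_eq_mul, smul_eq_mul, mul_zero, add_zero]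
    rw [← h2, h1]; ring
  -- coefficients of g beyond a non-divisible one
  have hbound : ∀ n : ℕ, ¬ α ∣ g.coeff n → n ≤ g.natDegree := by
    intro n hn
    by_contra h
    exact hn (by rw [Polynomial.coeff_eq_zero_of_natDegree_lt (by omega)]; exact dvd_zero α)
  obtain ⟨n₀, hn₀⟩ := hgne
  set N : ℕ := Nat.findGreatest (fun n => ¬ α ∣ g.coeff n) g.natDegree with hNdef
  have hN : ¬ α ∣ g.coeff N := Nat.findGreatest_spec (P := fun n => ¬ α ∣ g.coeff n) (hbound n₀ hn₀) hn₀
  have hNmax : ∀ m : ℕ, N < m → α ∣ g.coeff m := by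
    intro m hm
    by_cases hmd : m ≤ g.natDegree
    · by_contra h
      exact Nat.findGreatest_is_greatest hm hmd h
    · rw [Polynomial.coeff_eq_zero_of_natDegree_lt (by omega)]; exact dvd_zero α
  -- there is a coefficient of index ≥ 1 not divisible by α
  have hhigh : ∃ j : ℕ, 1 ≤ j ∧ ¬ α ∣ g.coeff j := by
    by_contra h
    push_neg at h
    have hdvd : Polynomial.C α ∣ g - Polynomial.C (g.coeff 0) := by
      rw [Polynomial.C_dvd_iff_dvd_coeff]
      intro i
      rcases Nat.eq_zero_or_pos i with hi | hi
      · subst hi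
        rw [Polynomial.coeff_sub, Polynomial.coeff_C_zero, sub_self]
        exact dvd_zero α
      · rw [Polynomial.coeff_sub, Polynomial.coeff_C, if_neg (by omega), sub_zero]
        exact h i hi
    obtain ⟨q, hq⟩ := hdvd
    have hg0 : g = Polynomial.C (g.coeff 0) + Polynomial.C α * q := by
      rw [← hq]; ring
    have heval : (α : B) ^ ℓ₁ * y₁ = ((g.coeff 0 : A) : B) + (α : B) * Polynomial.aeval z q := by
      rw [← hgy]
      conv_lhs => rw [hg0]
      rw [Polynomial.aeval_add, Polynomial.aeval_mul, Polynomial.aeval_C, Polynomial.aeval_C]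
      rfl
    set b : B := (α : B) ^ (ℓ₁ - 1) * y₁ - Polynomial.aeval z q with hbdef
    have heq : ((g.coeff 0 : A) : B) = (α : B) * b := by
      rw [hbdef]
      have : (α : B) ^ ℓ₁ = (α : B) * (α : B) ^ (ℓ₁ - 1) := by
        rw [← pow_succ']; congr 1; omega
      rw [this] at heval
      linear_combination -heval
    have hδb : δ b = 0 := by
      have h0 : (0 : B) = (α : B) * δ b := by
        have := hδA (g.coeff 0)
        rw [heq, δ.leibniz, hδA, smul_eq_mul, smul_eq_mul, mul_zero, add_zero] at this
        exact this.symm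
      rcases mul_eq_zero.1 h0.symm with h | h
      · exact absurd h hαB0
      · exact h
    have hbA : b ∈ A := (hA b).2 hδb
    have : α ∣ g.coeff 0 := ⟨⟨b, hbA⟩, Subtype.ext heq⟩
    rcases Nat.eq_zero_or_pos n₀ with h0 | h0
    · exact hn₀ (h0 ▸ this)
    · exact hn₀ (h n₀ h0)
  -- the polynomial β·g' has a coefficient not divisible by α
  have hPcoeff : ∀ m : ℕ, (Polynomial.C β * Polynomial.derivative g).coeff m
      = β * (g.coeff (m + 1) * ((m : A) + 1)) := by
    intro m
    rw [Polynomial.coeff_C_mul, Polynomial.coeff_derivative]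
  have hunit : ∀ j : ℕ, 1 ≤ j → IsUnit ((j : A)) := by
    intro j hj
    have h1 : ((j : k) : k) ≠ 0 := Nat.cast_ne_zero.2 (by omega)
    have h2 : IsUnit ((j : k)) := isUnit_iff_ne_zero.2 h1
    have h3 : IsUnit (algebraMap k A (j : k)) := h2.map (algebraMap k A)
    rwa [map_natCast] at h3
  have hPne : ∃ n : ℕ, ¬ α ∣ (Polynomial.C β * Polynomial.derivative g).coeff n := by
    obtain ⟨j, hj1, hjnd⟩ := hhigh
    refine ⟨j - 1, ?_⟩
    rw [hPcoeff]
    have hj : j - 1 + 1 = j := by omega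
    rw [hj]
    intro hdvd
    rcases hαprime.dvd_mul.1 hdvd with h | h
    · exact hαprime.not_unit (hcop dvd_rfl h)
    · rcases hαprime.dvd_mul.1 h with h | h
      · exact hjnd h
      · have : ((j - 1 : ℕ) : A) + 1 = ((j : ℕ) : A) := by
          push_cast [Nat.cast_sub (by omega : 1 ≤ j)]; ring
        rw [this] at h
        exact hαprime.not_unit (isUnit_of_dvd_unit h (hunit j hj1))
  -- ℓ₁ ≤ p
  have hle : ℓ₁ ≤ p := by
    by_contra hlp
    push_neg at hlp
    have hsplit : (α : B) ^ ℓ₁ = (α : B) ^ p * ((α : B) * (α : B) ^ (ℓ₁ - p - 1)) := by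
      rw [← pow_succ', ← pow_add]; congr 1; omega
    have hcanc : (β : B) * G' = (α : B) * ((α : B) ^ (ℓ₁ - p - 1) * δ y₁) := by
      have := hkey
      rw [hsplit] at this
      have h2 : (α : B) ^ p * ((α : B) * ((α : B) ^ (ℓ₁ - p - 1) * δ y₁))
          = (α : B) ^ p * ((β : B) * G') := by
        linear_combination this
      exact (mul_left_cancel₀ (pow_ne_zero p hαB0) h2).symm
    have hPI : ∃ b : B, Polynomial.aeval z (Polynomial.C β * Polynomial.derivative g)
        = (α : B) * b := by
      refine ⟨(α : B) ^ (ℓ₁ - p - 1) * δ y₁, ?_⟩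
      rw [Polynomial.aeval_mul, Polynomial.aeval_C]
      show (β : B) * G' = _
      exact hcanc
    obtain ⟨m, hmN, hmnd⟩ := hgmin _ hPI hPne N hN
    refine hmnd ?_
    rw [hPcoeff]
    exact Dvd.dvd.mul_left (Dvd.dvd.mul_right (hNmax (m + 1) (by omega)) _) β
  refine ⟨hle, ?_⟩
  -- cancel α^ℓ₁
  have hsplit : (α : B) ^ p = (α : B) ^ ℓ₁ * (α : B) ^ (p - ℓ₁) := by
    rw [← pow_add]; congr 1; omega
  have h2 : (α : B) ^ ℓ₁ * δ y₁ = (α : B) ^ ℓ₁ * ((α : B) ^ (p - ℓ₁) * (β : B) * G') := by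
    rw [hkey, hsplit]; ring
  exact mul_left_cancel₀ (pow_ne_zero ℓ₁ hαB0) h2
end

section
/- Let A be a UFD of characteristic zero, α ∈ A prime, K = Frac(A/αA), and let (I_i)_{i≥1} be a descending chain of ideals of A[z] with I_i = A[z] ∩ αⁱB for a domain extension B in which α is prime, such that the images Ī_i^K in K[z̄] are principal, Ī₁^K = (ḡ) with ḡ irreducible in K[z̄]. If ℓ_j is defined so that Ī^K_{ℓ_j} ⊋ Ī^K_{ℓ_j + 1} at exactly the j-th jump, then Ī^K_{ℓ_j} = ḡ^j K[z̄] and j·ℓ₁ ≤ ℓ_j for all j ≥ 1. -/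
/-- Lemma 3.3: `A` a UFD of characteristic zero, `α ∈ A` prime, `K = Frac(A/αA)`
(presented by `ψ : A →+* K` with kernel `(α)` and `K` generated by the fractions
`ψ a / ψ b`), `B` a domain extension of `A` in which `α` stays prime, and
`I_i = A[z] ∩ αⁱB`. If the images `Ī_i = J i` in `K[z̄]` satisfy
`Ī₁ = (ḡ)` with `ḡ` irreducible and `ℓ_j` marks the `j`-th strict jump of the
descending chain `(Ī_i)`, then `Ī_{ℓ_j} = (ḡʲ)` and `j·ℓ₁ ≤ ℓ_j` for all `j`. -/
theorem stmt17 {A B K : Type*} [CommRing A] [IsDomain A]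
    [UniqueFactorizationMonoid A] [CharZero A] [CommRing B] [IsDomain B] [Field K]
    (φ : A →+* B) (hφ : Function.Injective φ)
    (α : A) (hα : Prime α) (hαB : Prime (φ α)) (z : B)
    (ψ : A →+* K) (hker : RingHom.ker ψ = Ideal.span {α})
    (hfrac : ∀ x : K, ∃ a b : A, ψ b ≠ 0 ∧ x = ψ a / ψ b)
    (I : ℕ → Ideal (Polynomial A))
    (hI : ∀ i, I i = (Ideal.span {φ α ^ i}).comap (Polynomial.eval₂RingHom φ z))
    (J : ℕ → Ideal (Polynomial K))
    (hJ : ∀ i, J i = (I i).map (Polynomial.mapRingHom ψ))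
    (hprinc : ∀ i, (J i).IsPrincipal)
    (g : Polynomial A) (hgI : g ∈ I 1)
    (hgen : J 1 = Ideal.span {g.map ψ}) (hgirr : Irreducible (g.map ψ))
    (m : ℕ) (ℓ : ℕ → ℕ) (hℓ1 : 1 ≤ ℓ 1)
    (hmono : ∀ j, 1 ≤ j → j < m → ℓ j < ℓ (j + 1))
    (hflat1 : ∀ i, 1 ≤ i → i ≤ ℓ 1 → J i = J 1)
    (hjump : ∀ j, 1 ≤ j → j ≤ m → J (ℓ j) ≠ J (ℓ j + 1))
    (hflat : ∀ j, 1 ≤ j → j < m → ∀ i, ℓ j < i → i ≤ ℓ (j + 1) → J i = J (ℓ (j + 1))) :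
    ∀ j, 1 ≤ j → j ≤ m →
      J (ℓ j) = Ideal.span {(g.map ψ) ^ j} ∧ j * ℓ 1 ≤ ℓ j := by

  classical
  set gb := g.map ψ with hgb
  have hgb0 : gb ≠ 0 := hgirr.ne_zero
  -- the chain I is descending
  have hIanti : ∀ i i' : ℕ, i ≤ i' → I i' ≤ I i := by
    intro i i' hii
    rw [hI, hI]
    exact Ideal.comap_mono (Ideal.span_singleton_le_span_singleton.mpr (pow_dvd_pow _ hii))
  have hJanti : ∀ i i' : ℕ, i ≤ i' → J i' ≤ J i := by
    intro i i' hii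
    rw [hJ, hJ]
    exact Ideal.map_mono (hIanti i i' hii)
  -- multiplicativity
  have hImul : ∀ i i' : ℕ, ∀ p ∈ I i, ∀ q ∈ I i', p * q ∈ I (i + i') := by
    intro i i' p hp q hq
    rw [hI] at hp hq ⊢
    rw [Ideal.mem_comap, Ideal.mem_span_singleton] at hp hq ⊢
    rw [map_mul, pow_add]
    exact mul_dvd_mul hp hq
  have hJmul : ∀ i i' : ℕ, J i * J i' ≤ J (i + i') := by
    intro i i'
    rw [hJ i, hJ i', hJ (i + i'), ← Ideal.map_mul]
    apply Ideal.map_mono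
    rw [Ideal.mul_le]
    intro p hp q hq
    exact hImul i i' p hp q hq
  have hgJ1 : gb ∈ J 1 := by
    rw [hJ]; exact Ideal.mem_map_of_mem _ hgI
  have hgJl1 : gb ∈ J (ℓ 1) := by
    rw [hflat1 (ℓ 1) hℓ1 le_rfl]; exact hgJ1
  have hpowmem : ∀ j : ℕ, 1 ≤ j → gb ^ j ∈ J (j * ℓ 1) := by
    intro j hj
    induction j with
    | zero => omega
    | succ n ih =>
      rcases Nat.lt_or_ge n 1 with hn0 | hn1
      · have : n = 0 := by omega
        subst this
        simpa using hgJl1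
      · have h1 : gb ^ n * gb ∈ J (n * ℓ 1 + ℓ 1) :=
          hJmul _ _ (Ideal.mul_mem_mul (ih hn1) hgJl1)
        rw [pow_succ, Nat.succ_mul]
        exact h1
  -- the bound, given the ideal identity
  have hbound : ∀ j, 1 ≤ j → j ≤ m → J (ℓ j) = Ideal.span {gb ^ j} → j * ℓ 1 ≤ ℓ j := by
    intro j hj hjm hJeq
    by_contra hlt
    push_neg at hlt
    have h1 : gb ^ j ∈ J (ℓ j + 1) := hJanti _ _ hlt (hpowmem j hj)
    have h2 : J (ℓ j + 1) ≤ J (ℓ j) := hJanti _ _ (Nat.le_succ _)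
    have h3 : J (ℓ j) = J (ℓ j + 1) := by
      refine le_antisymm ?_ h2
      rw [hJeq, Ideal.span_le, Set.singleton_subset_iff]
      exact h1
    exact hjump j hj hjm h3
  intro j
  induction j with
  | zero => intro h; omega
  | succ n ih =>
    intro _ hjm
    rcases Nat.lt_or_ge n 1 with hn0 | hn1
    · have hn : n = 0 := by omega
      subst hn
      have hJeq : J (ℓ 1) = Ideal.span {gb ^ 1} := by
        rw [hflat1 (ℓ 1) hℓ1 le_rfl, hgen, pow_one]
      exact ⟨hJeq, hbound 1 le_rfl hjm hJeq⟩
    · have hnm' : n < m := by omega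
      obtain ⟨ihJ, ihb⟩ := ih hn1 (le_of_lt hnm')
      have hlt : ℓ n < ℓ (n + 1) := hmono n hn1 hnm'
      have hflatEq : J (ℓ n + 1) = J (ℓ (n + 1)) :=
        hflat n hn1 hnm' (ℓ n + 1) (Nat.lt_succ_self _) hlt
      have hmem : gb ^ (n + 1) ∈ J (ℓ (n + 1)) := by
        rw [← hflatEq]
        have h1 : gb ^ n * gb ∈ J (ℓ n + 1) :=
          hJmul (ℓ n) 1
            (Ideal.mul_mem_mul (by rw [ihJ]; exact Ideal.mem_span_singleton_self _) hgJ1)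
        rwa [pow_succ]
      obtain ⟨h, hh0⟩ := (hprinc (ℓ (n + 1))).principal
      have hh : J (ℓ (n + 1)) = Ideal.span {h} := hh0
      have hsub : J (ℓ (n + 1)) ≤ J (ℓ n) := hJanti _ _ (le_of_lt hlt)
      have hhmem : h ∈ J (ℓ n) := by
        apply hsub
        rw [hh]
        exact Ideal.mem_span_singleton_self h
      have hdvd1 : gb ^ n ∣ h := by
        rwa [ihJ, Ideal.mem_span_singleton] at hhmem
      have hdvd2 : h ∣ gb ^ (n + 1) := by
        rw [hh] at hmem
        exact Ideal.mem_span_singleton.mp hmem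
      obtain ⟨c, hc⟩ := hdvd1
      have hcg : c ∣ gb := by
        have hx : gb ^ n * c ∣ gb ^ n * gb := by
          rw [← hc, ← pow_succ]; exact hdvd2
        exact (mul_dvd_mul_iff_left (pow_ne_zero n hgb0)).mp hx
      obtain ⟨d, hd⟩ := hcg
      rcases hgirr.isUnit_or_isUnit hd with hcu | hdu
      · exfalso
        apply hjump n hn1 (le_of_lt hnm')
        rw [ihJ, hflatEq, hh]
        refine Ideal.span_singleton_eq_span_singleton.mpr ⟨hcu.unit, ?_⟩
        rw [hcu.unit_spec]
        exact hc.symm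
      · have hassoc : Associated h (gb ^ (n + 1)) := by
          refine ⟨hdu.unit, ?_⟩
          rw [hdu.unit_spec, hc, pow_succ, hd]
          ring
        have hJeq : J (ℓ (n + 1)) = Ideal.span {gb ^ (n + 1)} := by
          rw [hh]
          exact Ideal.span_singleton_eq_span_singleton.mpr hassoc
        exact ⟨hJeq, hbound (n + 1) (by omega) hjm hJeq⟩
end

section
/- Let B = k[x,y,z] be a polynomial ring over a field k of characteristic 0 with the locally nilpotent derivation δ given by δ(x) = 0, δ(y) = −2z, δ(z) = x². Then the kernel of δ equals k[x, t] where t = x²y + z², and k[x,t] is a polynomial ring in two variables (x and t are algebraically independent over k). -/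
/-!
Write `δ = -2z ∂_y + x² ∂_z`, let `δ p = 0` and let `p_{a,b,c}` be the coefficient of `x^a y^b z^c`
in `p`. Comparing coefficients of `x^a y^b z^(c+1)` in `δ p` gives
`2(b+1) p_{a,b+1,c} = (c+2) p_{a-2,b,c+2}` (the right side read as `0` when `a < 2`), so
`p_{a,b,c} = 0` whenever `a < 2b`. Hence `p(x, y, 0) ∈ k[x, x²y]`, the image of `k[x, t]` under
`z ↦ 0`, and there is `q ∈ k[x, t]` with `z ∣ p - q`. Finally a kernel element `r` divisible by `z`
vanishes: if `r = z^(n+1) s` then `0 = δ r = z^n ((n+1) x² s + z δ s)`, so `z ∣ s`, and `r` is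
divisible by every power of `z`.

For the algebraic independence, `z ↦ 0` sends `(x, t)` to `(x, x²y)`, and the monomials
`x^i (x²y)^j = x^(i+2j) y^j` are pairwise distinct.
-/

open MvPolynomial

namespace DerivationKernel

variable {k : Type*} [Field k]

local notation "B" => MvPolynomial (Fin 3) k

noncomputable def D : Derivation k B B := (-2 * X 2 : B) • pderiv 1 + (X 0 ^ 2 : B) • pderiv 2

noncomputable def t : B := X 0 ^ 2 * X 1 + X 2 ^ 2

theorem D_X_zero : D (X 0 : B) = 0 := by simp [D, pderiv_X]
theorem D_X_one : D (X 1 : B) = -2 * X 2 := by simp [D, pderiv_X]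
theorem D_X_two : D (X 2 : B) = X 0 ^ 2 := by simp [D, pderiv_X]

theorem eq_D (δ : Derivation k B B) (hx : δ (X 0) = 0) (hy : δ (X 1) = -2 * X 2)
    (hz : δ (X 2) = X 0 ^ 2) : δ = D :=
  derivation_ext fun i => by fin_cases i <;> simp [hx, hy, hz, D_X_zero, D_X_one, D_X_two]

theorem D_t : D (t : B) = 0 := by
  simp only [t, map_add, Derivation.leibniz, Derivation.leibniz_pow, D_X_zero, D_X_one, D_X_two,
    smul_eq_mul, nsmul_eq_mul]
  ring

theorem D_eq_zero_of_mem_adjoin {q : B} (hq : q ∈ Algebra.adjoin k {X 0, t}) :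
    D q = 0 := by
  refine Derivation.eqOn_adjoin (D2 := 0) ?_ hq
  rintro _ (rfl | rfl)
  · exact D_X_zero
  · exact D_t

noncomputable def monExp (a b c : ℕ) : Fin 3 →₀ ℕ := Finsupp.equivFunOnFinite.symm ![a, b, c]

@[simp] theorem monExp_apply_zero (a b c : ℕ) : monExp a b c 0 = a := rfl
@[simp] theorem monExp_apply_one (a b c : ℕ) : monExp a b c 1 = b := rfl
@[simp] theorem monExp_apply_two (a b c : ℕ) : monExp a b c 2 = c := rfl

theorem monExp_add_single_one (a b c : ℕ) :
    monExp a b c + Finsupp.single 1 1 = monExp a (b + 1) c := by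
  ext i; fin_cases i <;> simp [monExp]

theorem monExp_add_single_two (a b c : ℕ) :
    monExp a b c + Finsupp.single 2 1 = monExp a b (c + 1) := by
  ext i; fin_cases i <;> simp [monExp]

theorem coeff_X_two_mul (a b c : ℕ) (q : B) :
    coeff (monExp a b (c + 1)) (X 2 * q) = coeff (monExp a b c) q := by
  rw [← monExp_add_single_two, mul_comm, coeff_mul_X]

theorem coeff_X_zero_sq_mul (a b c : ℕ) (q : B) :
    coeff (monExp a b c) (X 0 ^ 2 * q) = if 2 ≤ a then coeff (monExp (a - 2) b c) q else 0 := by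
  rw [mul_comm, X_pow_eq_monomial, coeff_mul_monomial', mul_one]
  congr 1
  · simp [monExp, Finsupp.single_le_iff]
  · congr 1; ext i; fin_cases i <;> simp [monExp]

theorem coeff_relation_of_D_eq_zero {p : B} (hp : D p = 0) (a b c : ℕ) :
    2 * (b + 1) * coeff (monExp a (b + 1) c) p =
      if 2 ≤ a then (c + 2) * coeff (monExp (a - 2) b (c + 2)) p else 0 := by
  have h := congrArg (coeff (monExp a b (c + 1))) hp
  simp only [D, Derivation.add_apply, Derivation.smul_apply, smul_eq_mul, coeff_add, coeff_zero,
    mul_assoc, coeff_X_zero_sq_mul] at h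
  rw [neg_mul, show (2 : B) = C 2 from (map_ofNat C 2).symm, coeff_neg, coeff_C_mul,
    coeff_X_two_mul, coeff_pderiv, coeff_pderiv, monExp_add_single_one, monExp_add_single_two] at h
  simp only [monExp_apply_one, monExp_apply_two] at h
  split_ifs at h ⊢
  · push_cast at h
    linear_combination -h
  · linear_combination -h

theorem coeff_eq_zero_of_lt_two_mul [CharZero k] {p : B} (hp : D p = 0) {s : Fin 3 →₀ ℕ}
    (hs : s 0 < 2 * s 1) : coeff s p = 0 := by
  suffices h : ∀ b a c, a < 2 * b → coeff (monExp a b c) p = 0 by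
    convert h (s 1) (s 0) (s 2) hs
    ext i; fin_cases i <;> rfl
  intro b
  induction b with
  | zero => intro a c h; omega
  | succ b ih =>
    intro a c h
    have hrel : 2 * (b + 1) * coeff (monExp a (b + 1) c) p = 0 := by
      rw [coeff_relation_of_D_eq_zero hp]
      split_ifs
      · rw [ih (a - 2) (c + 2) (by omega), mul_zero]
      · rfl
    exact (mul_eq_zero.1 hrel).resolve_left (by exact_mod_cast (by omega : 2 * (b + 1) ≠ 0))

noncomputable def zToZero : B →ₐ[k] B := aeval ![X 0, X 1, 0]

theorem X_two_dvd_sub_zToZero (r : B) : X 2 ∣ r - zToZero r := by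
  induction r using MvPolynomial.induction_on with
  | C a => simp
  | add p q hp hq => rw [map_add, add_sub_add_comm]; exact dvd_add hp hq
  | mul_X p i hp =>
    rw [map_mul, show p * X i - zToZero p * zToZero (X i) =
      (p - zToZero p) * X i + zToZero p * (X i - zToZero (X i)) by ring]
    refine dvd_add (dvd_mul_of_dvd_left hp _) (dvd_mul_of_dvd_right ?_ _)
    fin_cases i <;> simp [zToZero]

theorem X_two_dvd_of_D_X_two_pow_mul [CharZero k] (n : ℕ) {s : B}
    (h : D (X 2 ^ (n + 1) * s) = 0) : X 2 ∣ s := by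
  have hfactor : X 2 ^ n * (X 2 * D s + (n + 1 : B) * X 0 ^ 2 * s) = 0 := by
    rw [← h, Derivation.leibniz, Derivation.leibniz_pow, D_X_two]
    simp only [smul_eq_mul, nsmul_eq_mul]
    push_cast
    ring
  have hsum := (mul_eq_zero.1 hfactor).resolve_left (pow_ne_zero _ (X_ne_zero 2))
  have hdvd : X 2 ∣ (n + 1 : B) * X 0 ^ 2 * s := ⟨-D s, by linear_combination hsum⟩
  refine ((X_prime).dvd_or_dvd hdvd).resolve_left ?_
  rintro ⟨w, hw⟩
  exact Nat.cast_add_one_ne_zero (R := B) n (by simpa [zToZero] using congrArg zToZero hw)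

theorem eq_zero_of_X_two_dvd [CharZero k] {p : B} (hp : D p = 0) (h : X 2 ∣ p) : p = 0 := by
  have hpow : ∀ n, X 2 ^ (n + 1) ∣ p := by
    intro n
    induction n with
    | zero => simpa using h
    | succ n ih =>
      obtain ⟨s, rfl⟩ := ih
      rw [pow_succ]
      exact mul_dvd_mul_left _ (X_two_dvd_of_D_X_two_pow_mul n hp)
  by_contra hne
  obtain ⟨s, hs⟩ := hpow p.totalDegree
  have hs0 : s ≠ 0 := by rintro rfl; exact hne (by simpa using hs)
  have := congrArg totalDegree hs
  rw [totalDegree_mul_of_isDomain (pow_ne_zero _ (X_ne_zero 2)) hs0, totalDegree_X_pow] at this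
  omega

theorem zToZero_monomial (s : Fin 3 →₀ ℕ) (a : k) :
    zToZero (monomial s a) = if s 2 = 0 then C a * X 0 ^ s 0 * X 1 ^ s 1 else 0 := by
  rw [zToZero, aeval_monomial, Finsupp.prod_fintype _ _ (fun _ => pow_zero _),
    Fin.prod_univ_three]
  split_ifs with h <;> simp [h, algebraMap_eq, mul_assoc]

theorem zToZero_mem_adjoin [CharZero k] {p : B} (hp : D p = 0) :
    zToZero p ∈ Algebra.adjoin k {X 0, X 0 ^ 2 * X 1} := by
  rw [p.as_sum, map_sum]
  refine Subalgebra.sum_mem _ fun s hs => ?_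
  rw [zToZero_monomial]
  split_ifs
  · obtain ⟨m, hm⟩ : ∃ m, s 0 = m + 2 * s 1 := ⟨s 0 - 2 * s 1, by
      by_contra h
      exact mem_support_iff.1 hs (coeff_eq_zero_of_lt_two_mul hp (by omega))⟩
    rw [hm, show C (coeff s p) * X 0 ^ (m + 2 * s 1) * X 1 ^ s 1 =
      algebraMap k B (coeff s p) * (X 0 ^ m * (X 0 ^ 2 * X 1) ^ s 1) by rw [algebraMap_eq]; ring]
    exact mul_mem (Subalgebra.algebraMap_mem _ _) (mul_mem
      (pow_mem (Algebra.subset_adjoin (by simp)) _) (pow_mem (Algebra.subset_adjoin (by simp)) _))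
  · exact zero_mem _

theorem mem_adjoin_of_D_eq_zero [CharZero k] {p : B} (hp : D p = 0) :
    p ∈ Algebra.adjoin k {X 0, t} := by
  have himage : zToZero '' {X 0, t} = ({X 0, X 0 ^ 2 * X 1} : Set B) := by
    simp [Set.image_insert_eq, zToZero, t]
  have hmap : zToZero p ∈ (Algebra.adjoin k {X 0, t}).map zToZero := by
    rw [AlgHom.map_adjoin, himage]
    exact zToZero_mem_adjoin hp
  obtain ⟨q, hq, hqp⟩ := Subalgebra.mem_map.1 hmap
  have hdiff : D (p - q) = 0 := by rw [map_sub, hp, D_eq_zero_of_mem_adjoin hq, sub_zero]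
  have hdvd : X 2 ∣ p - q := by
    simpa only [map_sub, hqp, sub_self, sub_zero] using X_two_dvd_sub_zToZero (p - q)
  rwa [sub_eq_zero.1 (eq_zero_of_X_two_dvd hdiff hdvd)]

noncomputable def substExp (m : Fin 2 →₀ ℕ) : Fin 3 →₀ ℕ := monExp (m 0 + 2 * m 1) (m 1) 0

theorem substExp_injective : Function.Injective substExp := by
  intro m m' h
  have h0 := DFunLike.congr_fun h 0
  have h1 := DFunLike.congr_fun h 1
  simp only [substExp, monExp_apply_zero, monExp_apply_one] at h0 h1
  ext i; fin_cases i <;> simp <;> omega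

theorem aeval_monomial_eq_monomial_substExp (m : Fin 2 →₀ ℕ) (a : k) :
    aeval ![(X 0 : B), X 0 ^ 2 * X 1] (monomial m a) = monomial (substExp m) a := by
  rw [aeval_monomial, Finsupp.prod_fintype _ _ (fun _ => pow_zero _), Fin.prod_univ_two,
    monomial_eq, Finsupp.prod_fintype _ _ (fun _ => pow_zero _), Fin.prod_univ_three]
  simp only [Matrix.cons_val_zero, Matrix.cons_val_one, substExp, monExp_apply_zero,
    monExp_apply_one, monExp_apply_two, pow_zero, mul_one, algebraMap_eq]
  ring

theorem coeff_substExp_aeval (g : MvPolynomial (Fin 2) k) (m : Fin 2 →₀ ℕ) :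
    coeff (substExp m) (aeval ![(X 0 : B), X 0 ^ 2 * X 1] g) = coeff m g := by
  induction g using MvPolynomial.induction_on' with
  | monomial n a =>
    simp only [aeval_monomial_eq_monomial_substExp, coeff_monomial, substExp_injective.eq_iff]
  | add g g' hg hg' => rw [map_add, coeff_add, coeff_add, hg, hg']

theorem algebraicIndependent_X_zero_X_zero_sq_mul_X_one :
    AlgebraicIndependent k ![(X 0 : B), X 0 ^ 2 * X 1] := by
  rw [algebraicIndependent_iff_injective_aeval]
  intro g g' h
  ext m
  rw [← coeff_substExp_aeval, h, coeff_substExp_aeval]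

theorem algebraicIndependent_X_zero_t :
    AlgebraicIndependent k ![(X 0 : B), t] := by
  refine .of_comp zToZero ?_
  convert (algebraicIndependent_X_zero_X_zero_sq_mul_X_one (k := k)) using 1
  ext i; fin_cases i <;> simp [zToZero, t]

end DerivationKernel

open DerivationKernel in
/-- Example 4.1: for the locally nilpotent derivation `δ` of `B = k[x,y,z]` with
`δ x = 0`, `δ y = -2z`, `δ z = x²`, the kernel of `δ` is `k[x, t]` with
`t = x²y + z²`, and `x, t` are algebraically independent over `k`. -/
theorem stmt18 {k : Type*} [Field k] [CharZero k]
    (δ : Derivation k (MvPolynomial (Fin 3) k) (MvPolynomial (Fin 3) k))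
    (hx : δ (X 0) = 0)
    (hy : δ (X 1) = -(2 : MvPolynomial (Fin 3) k) * X 2)
    (hz : δ (X 2) = (X 0) ^ 2) :
    (∀ b : MvPolynomial (Fin 3) k,
      δ b = 0 ↔ b ∈ Algebra.adjoin k
        {(X 0 : MvPolynomial (Fin 3) k), (X 0) ^ 2 * X 1 + (X 2) ^ 2}) ∧
    AlgebraicIndependent k
      ![(X 0 : MvPolynomial (Fin 3) k), (X 0) ^ 2 * X 1 + (X 2) ^ 2] := by
  obtain rfl := eq_D δ hx hy hz
  exact ⟨fun _ => ⟨mem_adjoin_of_D_eq_zero, D_eq_zero_of_mem_adjoin⟩,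
    algebraicIndependent_X_zero_t⟩
end

section
/- Let B = k[x,y,z], char k = 0, with δ(x) = 0, δ(y) = −2z, δ(z) = x², A = Ker δ = k[x, t] where t = x²y + z². Then the plinth ideal δ(B) ∩ A equals x²A, i.e., an element a ∈ A lies in δ(B) if and only if a ∈ x²A. -/
/-!
Let `σ` be the involution `z ↦ -z`. It fixes `A` and anticommutes with `δ`, so it maps
`Ker δ` to itself. If `δ ξ = a ∈ A`, then `w = x²ξ - az` lies in `Ker δ`, hence so does its
`σ`-odd part `x²(ξ - σξ) - 2az`. A `σ`-odd polynomial is divisible by `z`, and no nonzero element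
of `Ker δ` is: writing it as `zⁿu` with `z ∤ u`, `δ(zⁿu) = 0` forces `z ∣ n x² u`. Hence
`x² ∣ 2za`, so `x² ∣ a`. Finally, if `a = P(x, t)` is divisible by `x²` then so is `P`, as the
specialisation `x ↦ x², y ↦ 0` turns `P(x, t)` into `P(x², z²)`.
-/

open MvPolynomial

namespace MvPolynomial

variable {σ R : Type*} [CommRing R]

theorem X_dvd_sub_aeval_update_zero [DecidableEq σ] (i : σ) (f : MvPolynomial σ R) :
    X i ∣ f - aeval (Function.update X i 0) f := by
  induction f using MvPolynomial.induction_on with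
  | C a => simp
  | add p q hp hq => simpa only [map_add, add_sub_add_comm] using dvd_add hp hq
  | mul_X p j hp =>
    have hj : X i ∣ X j - Function.update (X : σ → MvPolynomial σ R) i 0 j := by
      rcases eq_or_ne j i with rfl | h
      · simp
      · simp [Function.update_of_ne h]
    rw [map_mul, aeval_X, show ∀ a b c d : MvPolynomial σ R, a * b - c * d = (a - c) * b + c * (b - d)
      from fun _ _ _ _ => by ring]
    exact dvd_add (dvd_mul_of_dvd_left hp _) (dvd_mul_of_dvd_right hj _)

theorem X_dvd_iff_aeval_update_zero [DecidableEq σ] {i : σ} {f : MvPolynomial σ R} :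
    X i ∣ f ↔ aeval (Function.update (X : σ → MvPolynomial σ R) i 0) f = 0 := by
  refine ⟨?_, fun h => by simpa only [h, sub_zero] using X_dvd_sub_aeval_update_zero i f⟩
  rintro ⟨g, rfl⟩
  simp

theorem X_pow_dvd_of_X_pow_dvd_expand [IsDomain R] {p : ℕ} (hp : 0 < p) (i : σ) (n : ℕ)
    {f : MvPolynomial σ R} (h : X i ^ (p * n) ∣ expand p f) : X i ^ n ∣ f := by
  classical
  have hcomm : (aeval (Function.update X i 0)).comp (expand p) =
      (expand p).comp (aeval (Function.update (X : σ → MvPolynomial σ R) i 0)) := by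
    ext j : 1
    rcases eq_or_ne j i with rfl | h
    · simp [zero_pow hp.ne']
    · simp [Function.update_of_ne h]
  induction n generalizing f with
  | zero => simp
  | succ n ih =>
    obtain ⟨g, rfl⟩ : X i ∣ f := by
      have h1 : X i ∣ expand p f :=
        (dvd_pow_self _ (Nat.mul_ne_zero hp.ne' n.succ_ne_zero)).trans h
      rw [X_dvd_iff_aeval_update_zero, ← AlgHom.comp_apply, hcomm, AlgHom.comp_apply,
        expand_eq_zero hp] at h1
      exact X_dvd_iff_aeval_update_zero.mpr h1
    rw [map_mul, expand_X, mul_add, mul_one, pow_add, mul_comm,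
      mul_dvd_mul_iff_left (pow_ne_zero _ (X_ne_zero i))] at h
    rw [pow_succ']
    exact mul_dvd_mul_left _ (ih h)

variable [DecidableEq σ]

noncomputable def negX (i : σ) : MvPolynomial σ R →ₐ[R] MvPolynomial σ R :=
  aeval (Function.update X i (-X i))

@[simp]
theorem negX_X_self (i : σ) : negX i (X i : MvPolynomial σ R) = -X i := by
  simp [negX]

@[simp]
theorem negX_X_of_ne {i j : σ} (h : j ≠ i) : negX i (X j : MvPolynomial σ R) = X j := by
  simp [negX, Function.update_of_ne h]

@[simp]
theorem negX_negX (i : σ) (f : MvPolynomial σ R) : negX i (negX i f) = f := by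
  rw [← AlgHom.comp_apply, show (negX i).comp (negX i) = AlgHom.id R (MvPolynomial σ R) by
    ext j : 1
    rcases eq_or_ne j i with rfl | h <;> simp [*]]
  rfl

theorem X_dvd_of_negX_eq_neg [IsDomain R] [CharZero R] {i : σ} {f : MvPolynomial σ R}
    (h : negX i f = -f) : X i ∣ f := by
  have hcomp : (aeval (Function.update (X : σ → MvPolynomial σ R) i 0)).comp (negX (R := R) i) =
      aeval (Function.update (X : σ → MvPolynomial σ R) i 0) := by
    ext j : 1
    rcases eq_or_ne j i with rfl | h <;> simp [*]
  rw [X_dvd_iff_aeval_update_zero, ← self_eq_neg, ← map_neg, ← h, ← AlgHom.comp_apply, hcomp]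

theorem derivation_apply_negX {D : Derivation R (MvPolynomial σ R) (MvPolynomial σ R)} {i : σ}
    (hD : ∀ j, D (negX i (X j)) = -negX i (D (X j))) (f : MvPolynomial σ R) :
    D (negX i f) = -negX i (D f) := by
  -- conjugation by the involution `negX i` preserves the Leibniz rule
  let D' : Derivation R (MvPolynomial σ R) (MvPolynomial σ R) :=
    Derivation.mk' (-((negX i).toLinearMap ∘ₗ D.toLinearMap ∘ₗ (negX i).toLinearMap)) fun a b => by
      simp only [LinearMap.neg_apply, LinearMap.coe_comp, AlgHom.coe_toLinearMap,
        Derivation.coeFn_coe, Function.comp_apply, map_mul, Derivation.leibniz, smul_eq_mul,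
        map_add, negX_negX, neg_add_rev, mul_neg]
      ring
  have hD' : D' = D := derivation_ext fun j => by simp [D', hD]
  simpa [D'] using (DFunLike.congr_fun hD' (negX i f)).symm

end MvPolynomial

theorem Derivation.eq_zero_of_prime_dvd_of_apply_eq_zero {k B : Type*} [Field k] [CharZero k]
    [CommRing B] [IsDomain B] [WfDvdMonoid B] [Algebra k B] (D : Derivation k B B) {p w : B}
    (hp : Prime p) (hDp : ¬ p ∣ D p) (hw : D w = 0) (hpw : p ∣ w) : w = 0 := by
  by_contra hw0
  obtain ⟨n, u, hpu, rfl⟩ := WfDvdMonoid.max_power_factor hw0 hp.irreducible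
  obtain ⟨m, rfl⟩ : ∃ m, n = m + 1 := Nat.exists_eq_succ_of_ne_zero (by
    rintro rfl
    exact hpu (by simpa using hpw))
  have hm : IsUnit ((m + 1 : ℕ) : B) := by
    rw [← _root_.map_natCast (algebraMap k B)]
    exact (IsUnit.mk0 _ (Nat.cast_ne_zero.mpr m.succ_ne_zero)).map _
  have key : p ^ m * (((m + 1 : ℕ) : B) * (D p * u) + p * D u) = 0 := by
    rw [← hw, Derivation.leibniz, Derivation.leibniz_pow]
    simp only [smul_eq_mul, nsmul_eq_mul, Nat.add_sub_cancel]
    ring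
  have hdvd : p ∣ ((m + 1 : ℕ) : B) * (D p * u) :=
    (dvd_add_left (dvd_mul_right p (D u))).mp
      (by rw [(mul_eq_zero.mp key).resolve_left (pow_ne_zero _ hp.ne_zero)]; exact dvd_zero p)
  rcases hp.dvd_or_dvd ((hm.dvd_mul_left).mp hdvd) with h | h
  · exact hDp h
  · exact hpu h

namespace PlinthExample

variable {k : Type*} [Field k]

local notation "𝒜" => Algebra.adjoin k {(X 0 : MvPolynomial (Fin 3) k), X 0 ^ 2 * X 1 + X 2 ^ 2}

theorem adjoin_eq_range_aeval :
    𝒜 = (aeval ![(X 0 : MvPolynomial (Fin 3) k), X 0 ^ 2 * X 1 + X 2 ^ 2]).range := by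
  rw [← Algebra.adjoin_range_eq_range_aeval, Matrix.range_cons_cons_empty]

theorem exists_mem_adjoin_of_eq_X_zero_sq_mul {a b : MvPolynomial (Fin 3) k} (ha : a ∈ 𝒜)
    (hab : a = X 0 ^ 2 * b) : ∃ c ∈ 𝒜, a = X 0 ^ 2 * c := by
  rw [adjoin_eq_range_aeval] at ha ⊢
  obtain ⟨P, rfl⟩ := (AlgHom.mem_range _).mp ha
  let π : MvPolynomial (Fin 3) k →ₐ[k] MvPolynomial (Fin 2) k := aeval ![X 0 ^ 2, 0, X 1]
  have hπ : π.comp (aeval ![X 0, X 0 ^ 2 * X 1 + X 2 ^ 2]) = expand 2 := by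
    ext j : 1
    fin_cases j <;> simp [π]
  have hP : X 0 ^ (2 * 2) ∣ expand 2 P :=
    ⟨π b, by rw [← hπ, AlgHom.comp_apply, hab, map_mul, map_pow, pow_mul]; simp [π]⟩
  obtain ⟨Q, rfl⟩ := X_pow_dvd_of_X_pow_dvd_expand two_pos 0 2 hP
  exact ⟨aeval _ Q, ⟨Q, rfl⟩, by simp⟩

theorem negX_two_eq_self_of_mem_adjoin {a : MvPolynomial (Fin 3) k} (ha : a ∈ 𝒜) :
    negX 2 a = a := by
  refine (AlgHom.eqOn_adjoin_iff (φ := negX 2) (ψ := AlgHom.id k _)).mpr ?_ ha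
  rintro _ (rfl | rfl) <;> simp

variable (δ : Derivation k (MvPolynomial (Fin 3) k) (MvPolynomial (Fin 3) k))

theorem apply_eq_zero_of_mem_adjoin (hx : δ (X 0) = 0)
    (hy : δ (X 1) = -(2 : MvPolynomial (Fin 3) k) * X 2) (hz : δ (X 2) = X 0 ^ 2)
    {a : MvPolynomial (Fin 3) k} (ha : a ∈ 𝒜) : δ a = 0 := by
  refine Derivation.eqOn_adjoin (D2 := 0) ?_ ha
  rintro _ (rfl | rfl)
  · simpa using hx
  · simp only [map_add, Derivation.leibniz, Derivation.leibniz_pow, hx, hy, hz, smul_eq_mul,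
      nsmul_eq_mul, Nat.add_one_sub_one, pow_one, mul_zero, add_zero, Derivation.coe_zero,
      Pi.zero_apply]
    ring

theorem apply_negX_two (hx : δ (X 0) = 0)
    (hy : δ (X 1) = -(2 : MvPolynomial (Fin 3) k) * X 2) (hz : δ (X 2) = X 0 ^ 2)
    (f : MvPolynomial (Fin 3) k) : δ (negX 2 f) = -negX 2 (δ f) := by
  refine derivation_apply_negX (fun j => ?_) f
  fin_cases j <;> simp [hx, hy, hz, map_ofNat]

theorem X_zero_sq_dvd_apply_of_mem_adjoin [CharZero k] (hx : δ (X 0) = 0)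
    (hy : δ (X 1) = -(2 : MvPolynomial (Fin 3) k) * X 2) (hz : δ (X 2) = X 0 ^ 2)
    {ξ : MvPolynomial (Fin 3) k} (ha : δ ξ ∈ 𝒜) : X 0 ^ 2 ∣ δ ξ := by
  set a := δ ξ
  have hδa : δ a = 0 := apply_eq_zero_of_mem_adjoin δ hx hy hz ha
  set w := X 0 ^ 2 * ξ - a * X 2
  have hδw : δ w = 0 := by
    simp only [w, map_sub, Derivation.leibniz, Derivation.leibniz_pow, hx, hz, hδa, smul_eq_mul,
      nsmul_eq_mul, Nat.add_one_sub_one, pow_one, mul_zero, add_zero]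
    ring
  set v := w - negX 2 w
  have hδv : δ v = 0 := by
    simp [v, apply_negX_two δ hx hy hz, hδw]
  have hv : v = 0 := by
    refine δ.eq_zero_of_prime_dvd_of_apply_eq_zero X_prime ?_ hδv
      (X_dvd_of_negX_eq_neg (by rw [map_sub, negX_negX]; ring))
    rw [hz]
    exact fun h => by simpa using X_prime.dvd_of_dvd_pow h
  have hv' : v = X 0 ^ 2 * (ξ - negX 2 ξ) - 2 * X 2 * a := by
    simp only [v, w, map_sub, map_mul, map_pow, negX_X_of_ne (show (0 : Fin 3) ≠ 2 by decide),
      negX_X_self, negX_two_eq_self_of_mem_adjoin ha]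
    ring
  have hdvd : X 0 ^ 2 ∣ 2 * X 2 * a := ⟨ξ - negX 2 ξ, by linear_combination hv' - hv⟩
  refine X_prime.pow_dvd_of_dvd_mul_left 2 ?_ hdvd
  rw [X_dvd_iff_aeval_update_zero, map_mul, map_ofNat]
  simp

end PlinthExample

open PlinthExample in
/-- Example 4.1 (plinth ideal): for the locally nilpotent derivation `δ` of
`B = k[x,y,z]` with `δ x = 0`, `δ y = -2z`, `δ z = x²`, and
`A = Ker δ = k[x, t]`, `t = x²y + z²`, the plinth ideal `δ(B) ∩ A` equals `x²A`:
an element `a ∈ A` is of the form `δ ξ` iff `a ∈ x²A`. -/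
theorem stmt19 {k : Type*} [Field k] [CharZero k]
    (δ : Derivation k (MvPolynomial (Fin 3) k) (MvPolynomial (Fin 3) k))
    (hx : δ (X 0) = 0)
    (hy : δ (X 1) = -(2 : MvPolynomial (Fin 3) k) * X 2)
    (hz : δ (X 2) = (X 0) ^ 2) :
    ∀ a : MvPolynomial (Fin 3) k,
      a ∈ Algebra.adjoin k
        {(X 0 : MvPolynomial (Fin 3) k), (X 0) ^ 2 * X 1 + (X 2) ^ 2} →
      ((∃ ξ : MvPolynomial (Fin 3) k, δ ξ = a) ↔
        ∃ c ∈ Algebra.adjoin k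
          {(X 0 : MvPolynomial (Fin 3) k), (X 0) ^ 2 * X 1 + (X 2) ^ 2},
          a = (X 0) ^ 2 * c) := by
  intro a ha
  constructor
  · rintro ⟨ξ, rfl⟩
    obtain ⟨b, hb⟩ := X_zero_sq_dvd_apply_of_mem_adjoin δ hx hy hz ha
    exact exists_mem_adjoin_of_eq_X_zero_sq_mul ha hb
  · rintro ⟨c, hc, rfl⟩
    refine ⟨X 2 * c, ?_⟩
    rw [Derivation.leibniz, hz, apply_eq_zero_of_mem_adjoin δ hx hy hz hc, smul_zero, zero_add,
      smul_eq_mul, mul_comm]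
end
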